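/- arXiv:2302.14414 — 13 statements merged into one kernel-verified Lean document; each statement's English description precedes it below -/
import Mathlib

section
/- Let X be a real Banach space, κ an infinite cardinal. If X is κ-almost square (for every set A ⊂ S_X of cardinality < κ and every ε > 0 there is y ∈ S_X with ‖x ± y‖ ≤ 1 + ε for all x ∈ A), then X has the κ-SSD2P: for every set A ⊂ S_{X*} of cardinality < κ and ε > 0 there exist B ⊂ B_X which (1−ε)-norms A and y ∈ B_X with B ± y ⊂ B_X and ‖y‖ ≥ 1 − ε. -/
open Cardinal Metric Filter Topology NormedSpace
open scoped ENNReal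
universe u
noncomputable section

/-- A Banach space `X` has the `κ`-SSD2P if for every set `A` of norm-one functionals of
cardinality `< κ` and every `ε > 0` there are `B ⊆ B_X` which `(1-ε)`-norms `A` and
`y ∈ B_X` with `B ± y ⊆ B_X` and `‖y‖ ≥ 1 - ε`. -/
def SSD2P (κ : Cardinal.{u}) (X : Type u) [NormedAddCommGroup X] [NormedSpace ℝ X] : Prop :=
  ∀ A : Set (StrongDual ℝ X), (∀ f ∈ A, ‖f‖ = 1) → #A < κ → ∀ ε : ℝ, 0 < ε →
    ∃ (B : Set X) (y : X), B ⊆ closedBall 0 1 ∧ y ∈ closedBall (0 : X) 1 ∧ 1 - ε ≤ ‖y‖ ∧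
      (∀ x ∈ B, x + y ∈ closedBall (0 : X) 1 ∧ x - y ∈ closedBall (0 : X) 1) ∧
      (∀ f ∈ A, ∃ x ∈ B, 1 - ε ≤ f x)

section

variable {X : Type*} [NormedAddCommGroup X] [NormedSpace ℝ X]

/-- Rescaling a point of `‖x‖ < 1` to the sphere can only increase `|f x|`; a sign flip then
makes `f` itself large. -/
theorem exists_mem_sphere_lt_apply {f : StrongDual ℝ X} {r : ℝ} (hr : 0 ≤ r) (hrf : r < ‖f‖) :
    ∃ x ∈ sphere (0 : X) 1, r < f x := by
  obtain ⟨x, hx1, hfx⟩ := f.exists_lt_apply_of_lt_opNorm hrf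
  have hx0 : x ≠ 0 := by
    rintro rfl
    simp only [map_zero, norm_zero] at hfx
    linarith
  set z := ‖x‖⁻¹ • x
  have hz : z ∈ sphere (0 : X) 1 := by simp [z, norm_smul, hx0]
  have hfz : r < |f z| :=
    calc r < ‖f x‖ := hfx
      _ ≤ ‖x‖⁻¹ * ‖f x‖ := le_mul_of_one_le_left (norm_nonneg _) ((one_le_inv₀ (norm_pos_iff.2 hx0)).2 hx1.le)
      _ = |f z| := by simp [z, abs_mul]
  rcases lt_abs.1 hfz with h | h
  · exact ⟨z, hz, h⟩
  · exact ⟨-z, by simpa using hz, by simpa using h⟩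

theorem inv_smul_mem_closedBall_one {c : ℝ} (hc : 0 < c) {v : X} (hv : ‖v‖ ≤ c) :
    c⁻¹ • v ∈ closedBall (0 : X) 1 := by
  rw [mem_closedBall_zero_iff, norm_smul_of_nonneg (inv_nonneg.2 hc.le)]
  exact inv_mul_le_one_of_le₀ hv hc.le

end

theorem one_sub_le_inv_one_add_mul {ε δ a : ℝ} (hδ : 0 < δ) (hδε : δ ≤ ε / 2) (ha : 1 - δ ≤ a) :
    1 - ε ≤ (1 + δ)⁻¹ * a := by
  rw [le_inv_mul_iff₀ (by linarith)]
  nlinarith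

theorem SSD2P_of_ASQ_general {X : Type u} [NormedAddCommGroup X] [NormedSpace ℝ X]
    (κ : Cardinal.{u})
    (hasq : ∀ A : Set X, A ⊆ sphere (0 : X) 1 → #A < κ → ∀ ε : ℝ, 0 < ε →
      ∃ y ∈ sphere (0 : X) 1, ∀ x ∈ A, ‖x + y‖ ≤ 1 + ε ∧ ‖x - y‖ ≤ 1 + ε) :
    SSD2P κ X := by
  intro A hA hAκ ε hε
  set δ := min (ε / 2) (1 / 2)
  have hδ : 0 < δ := lt_min (by linarith) (by norm_num)
  have hδε : δ ≤ ε / 2 := min_le_left _ _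
  have hδ1 : δ ≤ 1 / 2 := min_le_right _ _
  choose g hg_sphere hg_norming using fun f : A =>
    exists_mem_sphere_lt_apply (f := (f : StrongDual ℝ X)) (r := 1 - δ) (by linarith)
      (by rw [hA f f.2]; linarith)
  obtain ⟨y, hy, hgy⟩ :=
    hasq (Set.range g) (Set.range_subset_iff.2 hg_sphere) (mk_range_le.trans_lt hAκ) δ hδ
  have hc : (0 : ℝ) < 1 + δ := by linarith
  have hy1 : ‖y‖ = 1 := mem_sphere_zero_iff_norm.1 hy
  -- Shrinking everything by `1 + δ` puts `B ± y` into the unit ball at a cost of `δ`.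
  refine ⟨Set.range fun f => (1 + δ)⁻¹ • g f, (1 + δ)⁻¹ • y, ?_, ?_, ?_, ?_, ?_⟩
  · refine Set.range_subset_iff.2 fun f => inv_smul_mem_closedBall_one hc ?_
    rw [mem_sphere_zero_iff_norm.1 (hg_sphere f)]
    linarith
  · exact inv_smul_mem_closedBall_one hc (by rw [hy1]; linarith)
  · rw [norm_smul_of_nonneg (inv_nonneg.2 hc.le)]
    exact one_sub_le_inv_one_add_mul hδ hδε (by rw [hy1]; linarith)
  · refine Set.forall_mem_range.2 fun f => ?_
    rw [← smul_add, ← smul_sub]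
    obtain ⟨hadd, hsub⟩ := hgy (g f) (Set.mem_range_self f)
    exact ⟨inv_smul_mem_closedBall_one hc hadd, inv_smul_mem_closedBall_one hc hsub⟩
  · intro f hf
    refine ⟨_, Set.mem_range_self ⟨f, hf⟩, ?_⟩
    rw [map_smul, smul_eq_mul]
    exact one_sub_le_inv_one_add_mul hδ hδε (hg_norming ⟨f, hf⟩).le

/-- Every `κ`-almost square Banach space has the `κ`-SSD2P. -/
theorem SSD2P_of_ASQ {X : Type u} [NormedAddCommGroup X] [NormedSpace ℝ X] [CompleteSpace X]
    (κ : Cardinal.{u}) (hκ : ℵ₀ ≤ κ)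
    (hasq : ∀ A : Set X, A ⊆ sphere (0 : X) 1 → #A < κ → ∀ ε : ℝ, 0 < ε →
      ∃ y ∈ sphere (0 : X) 1, ∀ x ∈ A, ‖x + y‖ ≤ 1 + ε ∧ ‖x - y‖ ≤ 1 + ε) :
    SSD2P κ X :=
  SSD2P_of_ASQ_general κ hasq
end
end

section
/- Let (Xₙ) be a sequence of real Banach spaces and κ > ℵ₀ a cardinal. Suppose that for every r ∈ [0,1) there is n ∈ ℕ such that for every set A ⊂ S_{Xₙ*} of cardinality < κ there exist B ⊂ B_{Xₙ} and y ∈ B_{Xₙ} with ‖y‖ ≥ r, B r-norms A, and B ± y ⊂ B_{Xₙ}. Then the c₀-sum c₀(ℕ, Xₙ) has the κ-SSD2P. -/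
/-!
Fix `ε > 0` and pick a component `Xₙ` with the `r`-approximate property for `r` close to `1`.
Given `f ∈ A`, take `x ∈ B` with `f x ≥ r` and replace its `n`-th coordinate by a point `b`
from the norming set of `Xₙ` for the restriction `g = f ∘ ιₙ`. The sup norm does not grow, the
`n`-th coordinate absorbs `± y`, and `f` changes by `g b - g (xₙ) ≥ r‖g‖ - ‖g‖ ≥ r - 1`.
-/

open Cardinal Metric Filter Topology NormedSpace
open scoped ENNReal
universe u
noncomputable section

/-- The `c₀`-sum of a sequence of normed spaces, as a submodule of `lp X ∞`. -/
def c0Set (X : ℕ → Type u) [∀ n, NormedAddCommGroup (X n)] [∀ n, NormedSpace ℝ (X n)] :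
    Submodule ℝ (lp X ∞) where
  carrier := {x | Tendsto (fun n => ‖x n‖) atTop (𝓝 0)}
  zero_mem' := by simp [tendsto_const_nhds]
  add_mem' := by
    intro x y hx hy
    have h := hx.add hy
    simp only [add_zero] at h
    refine squeeze_zero (fun n => norm_nonneg _) (fun n => ?_) h
    simp [norm_add_le]
  smul_mem' := by
    intro c x hx
    have h := hx.const_mul (‖c‖)
    simp only [mul_zero] at h
    refine squeeze_zero (fun n => norm_nonneg _) (fun n => ?_) h
    simp [norm_smul, mul_comm]

/-- The `c₀`-sum `c₀(ℕ, Xₙ)` with the supremum norm. -/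
abbrev c0Sum (X : ℕ → Type u) [∀ n, NormedAddCommGroup (X n)] [∀ n, NormedSpace ℝ (X n)] :
    Type u :=
  (c0Set X : Submodule ℝ (lp X ∞))

def SSD2PWith (κ : Cardinal.{u}) (r : ℝ) (E : Type u) [NormedAddCommGroup E]
    [NormedSpace ℝ E] : Prop :=
  ∀ A : Set (StrongDual ℝ E), (∀ f ∈ A, ‖f‖ = 1) → #A < κ →
    ∃ (B : Set E) (y : E), B ⊆ closedBall 0 1 ∧ y ∈ closedBall (0 : E) 1 ∧ r ≤ ‖y‖ ∧
      (∀ x ∈ B, x + y ∈ closedBall (0 : E) 1 ∧ x - y ∈ closedBall (0 : E) 1) ∧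
      (∀ f ∈ A, ∃ x ∈ B, r ≤ f x)

section Functional

variable {E : Type u} [NormedAddCommGroup E] [NormedSpace ℝ E]

theorem SSD2P.of_forall_pos {κ : Cardinal.{u}}
    (H : ∀ ε : ℝ, 0 < ε → SSD2PWith κ (1 - ε) E) : SSD2P κ E :=
  fun A hA hAcard ε hε => H ε hε A hA hAcard

theorem StrongDual.exists_norm_le_one_le_apply (f : StrongDual ℝ E) {r : ℝ} (hr : r < ‖f‖) :
    ∃ x : E, ‖x‖ ≤ 1 ∧ r ≤ f x := by
  obtain ⟨x, hx, hfx⟩ := f.exists_lt_apply_of_lt_opNorm hr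
  rcases le_or_gt 0 (f x) with hpos | hneg
  · exact ⟨x, hx.le, by rw [Real.norm_eq_abs, abs_of_nonneg hpos] at hfx; exact hfx.le⟩
  · refine ⟨-x, by simpa using hx.le, ?_⟩
    rw [Real.norm_eq_abs, abs_of_neg hneg] at hfx
    rw [map_neg]
    exact hfx.le

namespace SSD2PWith

variable {κ : Cardinal.{u}} {r : ℝ}

theorem mono (hE : SSD2PWith κ r E) {s : ℝ} (hsr : s ≤ r) : SSD2PWith κ s E := by
  intro A hA hAcard
  obtain ⟨B, y, hB, hy, hyr, hBy, hnorm⟩ := hE A hA hAcard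
  refine ⟨B, y, hB, hy, hsr.trans hyr, hBy, fun f hf => ?_⟩
  obtain ⟨x, hxB, hfx⟩ := hnorm f hf
  exact ⟨x, hxB, hsr.trans hfx⟩

/-- Normalising the nonzero functionals removes the restriction `‖f‖ = 1`. -/
theorem exists_mul_norm_le_apply (hE : SSD2PWith κ r E) {A : Set (StrongDual ℝ E)}
    (hAcard : #A < κ) :
    ∃ (B : Set E) (y : E), B ⊆ closedBall 0 1 ∧ y ∈ closedBall (0 : E) 1 ∧ r ≤ ‖y‖ ∧
      (∀ x ∈ B, x + y ∈ closedBall (0 : E) 1 ∧ x - y ∈ closedBall (0 : E) 1) ∧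
      (∀ f ∈ A, ∃ x ∈ B, r * ‖f‖ ≤ f x) := by
  set A' := (fun f : StrongDual ℝ E => ‖f‖⁻¹ • f) '' {f ∈ A | f ≠ 0}
  have hA' : ∀ f ∈ A', ‖f‖ = 1 := by
    rintro _ ⟨f, hf, rfl⟩
    exact norm_smul_inv_norm hf.2
  have hA'card : #A' < κ :=
    (mk_image_le.trans (mk_le_mk_of_subset (Set.sep_subset _ _))).trans_lt hAcard
  obtain ⟨B, y, hB, hy, hyr, hBy, hnorm⟩ := hE A' hA' hA'card
  have hy1 : ‖y‖ ≤ 1 := mem_closedBall_zero_iff.mp hy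
  refine ⟨insert 0 B, y, Set.insert_subset (mem_closedBall_self zero_le_one) hB, hy, hyr,
    ?_, fun f hf => ?_⟩
  · rintro x (rfl | hx)
    · simpa using hy1
    · exact hBy x hx
  by_cases hf0 : f = 0
  · exact ⟨0, Set.mem_insert _ _, by simp [hf0]⟩
  obtain ⟨x, hxB, hfx⟩ := hnorm _ ⟨f, ⟨hf, hf0⟩, rfl⟩
  have hfpos : 0 < ‖f‖ := norm_pos_iff.mpr hf0
  refine ⟨x, Set.mem_insert_of_mem _ hxB, ?_⟩
  rwa [smul_apply, smul_eq_mul, le_inv_mul_iff₀ hfpos, mul_comm] at hfx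

end SSD2PWith

end Functional

section C0Sum

variable {X : ℕ → Type u} [∀ n, NormedAddCommGroup (X n)] [∀ n, NormedSpace ℝ (X n)]

theorem single_mem_c0Set (n : ℕ) (a : X n) : lp.single ∞ n a ∈ c0Set X :=
  tendsto_const_nhds.congr' <| (eventually_gt_atTop n).mono fun k hk => by
    simp [Pi.single_eq_of_ne hk.ne']

variable (X) in
def c0single (n : ℕ) : X n →L[ℝ] c0Sum X :=
  (lp.singleContinuousLinearMap ℝ X ∞ n).codRestrict (c0Set X) (single_mem_c0Set n)

@[simp]
theorem coe_c0single (n : ℕ) (a : X n) : (c0single X n a : lp X ∞) = lp.single ∞ n a :=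
  rfl

theorem norm_c0single (n : ℕ) (a : X n) : ‖c0single X n a‖ = ‖a‖ :=
  lp.norm_single ENNReal.zero_lt_top n a

theorem norm_c0single_le_one (n : ℕ) : ‖c0single X n‖ ≤ 1 :=
  ContinuousLinearMap.opNorm_le_bound _ zero_le_one fun a => by
    rw [norm_c0single, one_mul]

def c0Update (x : c0Sum X) (n : ℕ) (b : X n) : c0Sum X :=
  x + c0single X n (b - (x : lp X ∞) n)

theorem coe_c0Update (x : c0Sum X) (n : ℕ) (b : X n) :
    ⇑(c0Update x n b : lp X ∞) = Function.update (⇑(x : lp X ∞)) n b := by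
  funext k
  rcases eq_or_ne k n with rfl | hk
  · simp [c0Update]
  · simp [c0Update, hk]

theorem c0Update_mem_closedBall {x : c0Sum X} {n : ℕ} {b : X n} {R : ℝ}
    (hx : x ∈ closedBall 0 R) (hb : b ∈ closedBall 0 R) : c0Update x n b ∈ closedBall 0 R := by
  rw [mem_closedBall_zero_iff] at hx hb ⊢
  change ‖(c0Update x n b : lp X ∞)‖ ≤ R
  refine lp.norm_le_of_forall_le ((norm_nonneg _).trans hb) fun k => ?_
  rw [coe_c0Update]
  rcases eq_or_ne k n with rfl | hk
  · simpa using hb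
  · simpa [hk] using (lp.norm_apply_le_norm ENNReal.top_ne_zero _ k).trans hx

theorem c0Update_add_c0single (x : c0Sum X) (n : ℕ) (b y : X n) :
    c0Update x n b + c0single X n y = c0Update x n (b + y) := by
  simp only [c0Update, add_sub_right_comm b y, map_add, add_assoc]

theorem c0Update_sub_c0single (x : c0Sum X) (n : ℕ) (b y : X n) :
    c0Update x n b - c0single X n y = c0Update x n (b - y) := by
  simp only [c0Update, sub_right_comm b y, map_sub, add_sub_assoc]

theorem apply_c0Update (f : StrongDual ℝ (c0Sum X)) (x : c0Sum X) (n : ℕ) (b : X n) :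
    f (c0Update x n b) = f x + f (c0single X n b) - f (c0single X n ((x : lp X ∞) n)) := by
  simp only [c0Update, map_add, map_sub, add_sub_assoc]

theorem SSD2PWith.c0Sum {κ : Cardinal.{u}} {r : ℝ} (hr : r < 1) {n : ℕ}
    (hn : SSD2PWith κ r (X n)) : SSD2PWith κ (2 * r - 1) (c0Sum X) := by
  intro A hA hAcard
  obtain ⟨B, y, hB, hy, hyr, hBy, hnorm⟩ :=
    hn.exists_mul_norm_le_apply (A := (fun f => f.comp (c0single X n)) '' A)
      (mk_image_le.trans_lt hAcard)
  refine ⟨{z | z ∈ closedBall 0 1 ∧ z + c0single X n y ∈ closedBall 0 1 ∧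
      z - c0single X n y ∈ closedBall 0 1}, c0single X n y, fun z hz => hz.1,
    by simpa only [mem_closedBall_zero_iff, norm_c0single] using hy,
    by rw [norm_c0single]; linarith, fun z hz => hz.2, fun f hf => ?_⟩
  obtain ⟨x, hx1, hfx⟩ := f.exists_norm_le_one_le_apply (r := r) (by rw [hA f hf]; exact hr)
  obtain ⟨b, hbB, hgb⟩ := hnorm _ (Set.mem_image_of_mem _ hf)
  set g := f.comp (c0single X n)
  have hg : ‖g‖ ≤ 1 := by
    calc ‖g‖ ≤ ‖f‖ * ‖c0single X n‖ := f.opNorm_comp_le _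
      _ ≤ 1 := by rw [hA f hf, one_mul]; exact norm_c0single_le_one n
  have hxn : ‖(x : lp X ∞) n‖ ≤ 1 := (lp.norm_apply_le_norm ENNReal.top_ne_zero _ n).trans hx1
  have hgx : g ((x : lp X ∞) n) ≤ ‖g‖ :=
    calc g ((x : lp X ∞) n) ≤ ‖g ((x : lp X ∞) n)‖ := Real.le_norm_self _
      _ ≤ ‖g‖ * ‖(x : lp X ∞) n‖ := g.le_opNorm _
      _ ≤ ‖g‖ := mul_le_of_le_one_right (norm_nonneg _) hxn
  have hx : x ∈ closedBall 0 1 := mem_closedBall_zero_iff.mpr hx1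
  refine ⟨c0Update x n b, ⟨c0Update_mem_closedBall hx (hB hbB), ?_, ?_⟩, ?_⟩
  · rw [c0Update_add_c0single]
    exact c0Update_mem_closedBall hx (hBy b hbB).1
  · rw [c0Update_sub_c0single]
    exact c0Update_mem_closedBall hx (hBy b hbB).2
  · have hfz : f (c0Update x n b) = f x + g b - g ((x : lp X ∞) n) := apply_c0Update f x n b
    have hloss : (1 - r) * ‖g‖ ≤ 1 - r := mul_le_of_le_one_right (by linarith) hg
    linarith

end C0Sum

theorem c0Sum_SSD2P_general (X : ℕ → Type u) [∀ n, NormedAddCommGroup (X n)]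
    [∀ n, NormedSpace ℝ (X n)]
    (κ : Cardinal.{u})
    (h : ∀ r : ℝ, 0 ≤ r → r < 1 → ∃ n : ℕ,
      ∀ A : Set (StrongDual ℝ (X n)), (∀ f ∈ A, ‖f‖ = 1) → #A < κ →
        ∃ (B : Set (X n)) (y : X n), B ⊆ closedBall 0 1 ∧ y ∈ closedBall (0 : X n) 1 ∧
          r ≤ ‖y‖ ∧
          (∀ x ∈ B, x + y ∈ closedBall (0 : X n) 1 ∧ x - y ∈ closedBall (0 : X n) 1) ∧
          (∀ f ∈ A, ∃ x ∈ B, r ≤ f x)) :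
    SSD2P κ (c0Sum X) := by
  refine SSD2P.of_forall_pos fun ε hε => ?_
  set r := max 0 (1 - ε / 2)
  have hr1 : r < 1 := max_lt zero_lt_one (by linarith)
  obtain ⟨n, hn⟩ := h r (le_max_left _ _) hr1
  exact (SSD2PWith.c0Sum hr1 hn).mono (by linarith [le_max_right 0 (1 - ε / 2)])

/-- If for every `r ∈ [0,1)` some component `Xₙ` satisfies the `r`-approximate version of
the `κ`-SSD2P, then the `c₀`-sum `c₀(ℕ, Xₙ)` has the `κ`-SSD2P. -/
theorem c0Sum_SSD2P (X : ℕ → Type u) [∀ n, NormedAddCommGroup (X n)]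
    [∀ n, NormedSpace ℝ (X n)] [∀ n, CompleteSpace (X n)]
    (κ : Cardinal.{u}) (hκ : ℵ₀ < κ)
    (h : ∀ r : ℝ, 0 ≤ r → r < 1 → ∃ n : ℕ,
      ∀ A : Set (StrongDual ℝ (X n)), (∀ f ∈ A, ‖f‖ = 1) → #A < κ →
        ∃ (B : Set (X n)) (y : X n), B ⊆ closedBall 0 1 ∧ y ∈ closedBall (0 : X n) 1 ∧
          r ≤ ‖y‖ ∧
          (∀ x ∈ B, x + y ∈ closedBall (0 : X n) 1 ∧ x - y ∈ closedBall (0 : X n) 1) ∧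
          (∀ f ∈ A, ∃ x ∈ B, r ≤ f x)) :
    SSD2P κ (c0Sum X) :=
  c0Sum_SSD2P_general X κ h
end
end

section
/- Let X and Y be real Banach spaces and κ > ℵ₀ a cardinal. Then the ℓ∞-direct sum X ⊕∞ Y has the κ-SSD2P if and only if X has the κ-SSD2P or Y has the κ-SSD2P. -/
open Cardinal Metric Filter Topology NormedSpace
open scoped ENNReal
universe u
noncomputable section

/-!
The dual of `X ⊕∞ Y` is `X* ⊕₁ Y*`: a functional `f` restricts to `g` on `X` and `k` on `Y`,
with `f (x, v) = g x + k v` and `‖f‖ ≤ ‖g‖ + ‖k‖`. If `X` has the `κ`-SSD2P, apply it to the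
normalised restrictions `g / ‖g‖` to get `B` and `y`; then `(B ∪ {0}) × B_Y` and `(y, 0)` work
for `X ⊕∞ Y`, because the max-norm lets the second coordinate range over all of `B_Y` and so
almost norm every `k`. Conversely, if `A_X, ε_X` and `A_Y, ε_Y` witness the failure for `X` and
`Y`, the pull-backs of `A_X` and `A_Y` along the projections form a set of cardinality `< κ`
since `κ` is infinite. The shift `y` of a witness for the sum has a coordinate of norm
`≥ 1 - ε`, and projecting onto that coordinate yields a witness for the corresponding factor.
-/

namespace ContinuousLinearMap

variable {𝕜 E F G : Type*} [NontriviallyNormedField 𝕜]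
  [NormedAddCommGroup E] [NormedSpace 𝕜 E] [NormedAddCommGroup F] [NormedSpace 𝕜 F]
  [NormedAddCommGroup G] [NormedSpace 𝕜 G]

theorem norm_comp_eq_of_comp_eq_id {T : E →L[𝕜] F} {S : F →L[𝕜] E} (hT : ‖T‖ ≤ 1)
    (hS : ‖S‖ ≤ 1) (hTS : T.comp S = .id 𝕜 F) (g : F →L[𝕜] G) : ‖g.comp T‖ = ‖g‖ := by
  refine le_antisymm ?_ ?_
  · calc ‖g.comp T‖ ≤ ‖g‖ * ‖T‖ := opNorm_comp_le g T
      _ ≤ ‖g‖ := mul_le_of_le_one_right (norm_nonneg g) hT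
  · calc ‖g‖ = ‖(g.comp T).comp S‖ := by rw [comp_assoc, hTS, comp_id]
      _ ≤ ‖g.comp T‖ * ‖S‖ := opNorm_comp_le _ S
      _ ≤ ‖g.comp T‖ := mul_le_of_le_one_right (norm_nonneg _) hS

end ContinuousLinearMap

namespace WithLp

variable {p : ℝ≥0∞} {𝕜 α β : Type*}

section Linear

variable [Semiring 𝕜] [TopologicalSpace α] [TopologicalSpace β] [AddCommGroup α]
  [AddCommGroup β] [Module 𝕜 α] [Module 𝕜 β]

variable (p 𝕜 α β) in
def inlL : α →L[𝕜] WithLp p (α × β) :=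
  (prodContinuousLinearEquiv p 𝕜 α β).symm.toContinuousLinearMap.comp (.inl 𝕜 α β)

variable (p 𝕜 α β) in
def inrL : β →L[𝕜] WithLp p (α × β) :=
  (prodContinuousLinearEquiv p 𝕜 α β).symm.toContinuousLinearMap.comp (.inr 𝕜 α β)

@[simp]
theorem inlL_apply (x : α) : inlL p 𝕜 α β x = toLp p (x, 0) := rfl

@[simp]
theorem inrL_apply (y : β) : inrL p 𝕜 α β y = toLp p (0, y) := rfl

theorem inlL_add_inrL (x : α) (y : β) : inlL p 𝕜 α β x + inrL p 𝕜 α β y = toLp p (x, y) := by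
  rw [inlL_apply, inrL_apply, ← toLp_add, Prod.mk_add_mk, add_zero, zero_add]

end Linear

section Normed

variable [Fact (1 ≤ p)] [NontriviallyNormedField 𝕜] [NormedAddCommGroup α] [NormedSpace 𝕜 α]
  [NormedAddCommGroup β] [NormedSpace 𝕜 β]

theorem norm_fstL_le : ‖fstL p 𝕜 α β‖ ≤ 1 :=
  ContinuousLinearMap.opNorm_le_bound _ zero_le_one fun z => by simpa using norm_fst_le _ z

theorem norm_sndL_le : ‖sndL p 𝕜 α β‖ ≤ 1 :=
  ContinuousLinearMap.opNorm_le_bound _ zero_le_one fun z => by simpa using norm_snd_le _ z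

theorem norm_inlL_le : ‖inlL p 𝕜 α β‖ ≤ 1 :=
  ContinuousLinearMap.opNorm_le_bound _ zero_le_one fun x => by simp

theorem norm_inrL_le : ‖inrL p 𝕜 α β‖ ≤ 1 :=
  ContinuousLinearMap.opNorm_le_bound _ zero_le_one fun y => by simp

variable {γ : Type*} [NormedAddCommGroup γ] [NormedSpace 𝕜 γ]

theorem norm_comp_fstL (g : α →L[𝕜] γ) : ‖g.comp (fstL p 𝕜 α β)‖ = ‖g‖ :=
  ContinuousLinearMap.norm_comp_eq_of_comp_eq_id (S := inlL p 𝕜 α β) norm_fstL_le norm_inlL_le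
    (ContinuousLinearMap.ext fun _ => rfl) g

theorem norm_comp_sndL (g : β →L[𝕜] γ) : ‖g.comp (sndL p 𝕜 α β)‖ = ‖g‖ :=
  ContinuousLinearMap.norm_comp_eq_of_comp_eq_id (S := inrL p 𝕜 α β) norm_sndL_le norm_inrL_le
    (ContinuousLinearMap.ext fun _ => rfl) g

theorem norm_le_norm_comp_inlL_add_norm_comp_inrL (f : WithLp ∞ (α × β) →L[𝕜] γ) :
    ‖f‖ ≤ ‖f.comp (inlL ∞ 𝕜 α β)‖ + ‖f.comp (inrL ∞ 𝕜 α β)‖ := by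
  refine f.opNorm_le_bound (by positivity) fun z => ?_
  have hz : f z = f.comp (inlL ∞ 𝕜 α β) z.fst + f.comp (inrL ∞ 𝕜 α β) z.snd := by
    rw [ContinuousLinearMap.comp_apply, ContinuousLinearMap.comp_apply, ← map_add,
      inlL_add_inrL]
    rfl
  calc ‖f z‖ ≤ ‖f.comp (inlL ∞ 𝕜 α β)‖ * ‖z.fst‖ + ‖f.comp (inrL ∞ 𝕜 α β)‖ * ‖z.snd‖ := by
        rw [hz]; exact norm_add_le_of_le ((f.comp _).le_opNorm _) ((f.comp _).le_opNorm _)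
    _ ≤ (‖f.comp (inlL ∞ 𝕜 α β)‖ + ‖f.comp (inrL ∞ 𝕜 α β)‖) * ‖z‖ := by
        rw [add_mul]
        gcongr
        exacts [norm_fst_le _ z, norm_snd_le _ z]

end Normed

end WithLp

section RealFunctional

variable {E : Type*} [NormedAddCommGroup E] [NormedSpace ℝ E]

theorem StrongDual.exists_mem_closedBall_mul_norm_le_apply (g : StrongDual ℝ E) {c : ℝ}
    (hc : c < 1) : ∃ x ∈ closedBall (0 : E) 1, c * ‖g‖ ≤ g x := by
  rcases eq_or_ne g 0 with rfl | hg
  · exact ⟨0, mem_closedBall_self zero_le_one, by simp⟩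
  obtain ⟨x, hx, hgx⟩ := g.exists_lt_apply_of_lt_opNorm
    (mul_lt_of_lt_one_left (norm_pos_iff.mpr hg) hc)
  rcases le_abs'.mp (show c * ‖g‖ ≤ |g x| from hgx.le) with hneg | hpos
  · exact ⟨-x, by simpa using hx.le, by simpa using le_neg_of_le_neg hneg⟩
  · exact ⟨x, by simpa using hx.le, hpos⟩

theorem StrongDual.exists_mul_norm_le_apply_of_norming {G : Set (StrongDual ℝ E)} {B : Set E}
    {c : ℝ} (hB : ∀ g ∈ (fun g => ‖g‖⁻¹ • g) '' (G \ {0}), ∃ x ∈ B, c ≤ g x)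
    (h0 : (0 : E) ∈ B) {g : StrongDual ℝ E} (hg : g ∈ G) : ∃ x ∈ B, c * ‖g‖ ≤ g x := by
  rcases eq_or_ne g 0 with rfl | hg0
  · exact ⟨0, h0, by simp⟩
  obtain ⟨x, hx, hgx⟩ := hB _ ⟨g, ⟨hg, hg0⟩, rfl⟩
  refine ⟨x, hx, ?_⟩
  rw [mul_comm, ← le_inv_mul_iff₀ (norm_pos_iff.mpr hg0)]
  simpa using hgx

end RealFunctional

section Witness

variable {E F : Type*} [NormedAddCommGroup E] [NormedSpace ℝ E]
  [NormedAddCommGroup F] [NormedSpace ℝ F]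

structure SSD2PWitness (A : Set (StrongDual ℝ E)) (ε : ℝ) (B : Set E) (y : E) : Prop where
  subset_closedBall : B ⊆ closedBall 0 1
  mem_closedBall : y ∈ closedBall (0 : E) 1
  one_sub_le_norm : 1 - ε ≤ ‖y‖
  add_sub_mem : ∀ x ∈ B, x + y ∈ closedBall (0 : E) 1 ∧ x - y ∈ closedBall (0 : E) 1
  norming : ∀ f ∈ A, ∃ x ∈ B, 1 - ε ≤ f x

theorem ssd2p_iff {κ : Cardinal.{u}} {X : Type u} [NormedAddCommGroup X] [NormedSpace ℝ X] :
    SSD2P κ X ↔ ∀ A : Set (StrongDual ℝ X), (∀ f ∈ A, ‖f‖ = 1) → #A < κ → ∀ ε : ℝ, 0 < ε →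
      ∃ (B : Set X) (y : X), SSD2PWitness A ε B y :=
  forall₄_congr fun _ _ _ _ => forall_congr' fun _ => exists₂_congr fun _ _ =>
    ⟨fun ⟨h₁, h₂, h₃, h₄, h₅⟩ => ⟨h₁, h₂, h₃, h₄, h₅⟩,
      fun ⟨h₁, h₂, h₃, h₄, h₅⟩ => ⟨h₁, h₂, h₃, h₄, h₅⟩⟩

namespace SSD2PWitness

variable {A A' : Set (StrongDual ℝ E)} {ε ε' : ℝ} {B : Set E} {y : E}

theorem mono (h : SSD2PWitness A ε B y) (hA : A' ⊆ A) (hε : ε ≤ ε') :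
    SSD2PWitness A' ε' B y where
  subset_closedBall := h.subset_closedBall
  mem_closedBall := h.mem_closedBall
  one_sub_le_norm := by linarith [h.one_sub_le_norm]
  add_sub_mem := h.add_sub_mem
  norming f hf := by
    obtain ⟨x, hx, hfx⟩ := h.norming f (hA hf)
    exact ⟨x, hx, by linarith⟩

theorem insert_zero (h : SSD2PWitness A ε B y) : SSD2PWitness A ε (insert 0 B) y where
  subset_closedBall := Set.insert_subset (mem_closedBall_self zero_le_one) h.subset_closedBall
  mem_closedBall := h.mem_closedBall
  one_sub_le_norm := h.one_sub_le_norm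
  add_sub_mem := by
    have hy := mem_closedBall_zero_iff.mp h.mem_closedBall
    rintro x (rfl | hx)
    · simpa using hy
    · exact h.add_sub_mem x hx
  norming f hf := by
    obtain ⟨x, hx, hfx⟩ := h.norming f hf
    exact ⟨x, Set.mem_insert_of_mem 0 hx, hfx⟩

theorem map {A : Set (StrongDual ℝ F)} (T : E →L[ℝ] F) (hT : ‖T‖ ≤ 1)
    (h : SSD2PWitness ((fun f => f.comp T) '' A) ε B y) (hy : 1 - ε ≤ ‖T y‖) :
    SSD2PWitness A ε (T '' B) (T y) := by
  have hball : ∀ x ∈ closedBall (0 : E) 1, T x ∈ closedBall (0 : F) 1 := fun x hx => by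
    rw [mem_closedBall_zero_iff] at hx ⊢
    exact T.le_of_opNorm_le_of_le hT hx |>.trans_eq (one_mul 1)
  refine ⟨?_, hball y h.mem_closedBall, hy, ?_, fun f hf => ?_⟩
  · rintro _ ⟨x, hx, rfl⟩
    exact hball x (h.subset_closedBall hx)
  · rintro _ ⟨x, hx, rfl⟩
    rw [← map_add, ← map_sub]
    exact ⟨hball _ (h.add_sub_mem x hx).1, hball _ (h.add_sub_mem x hx).2⟩
  · obtain ⟨x, hx, hfx⟩ := h.norming _ ⟨f, hf, rfl⟩
    exact ⟨T x, Set.mem_image_of_mem T hx, hfx⟩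

end SSD2PWitness

end Witness

section LinftyProd

open WithLp

variable {X Y : Type*} [NormedAddCommGroup X] [NormedSpace ℝ X]
  [NormedAddCommGroup Y] [NormedSpace ℝ Y]

theorem SSD2PWitness.withLpProd {A : Set (StrongDual ℝ (WithLp ∞ (X × Y)))}
    (hA : ∀ f ∈ A, ‖f‖ = 1) {ε : ℝ} (hε₀ : 0 < ε) (hε₁ : ε ≤ 1) {B : Set X} {y : X}
    (h : SSD2PWitness ((fun g => ‖g‖⁻¹ • g) '' ((fun f => f.comp (inlL ∞ ℝ X Y)) '' A \ {0}))
      ε B y) (h0 : (0 : X) ∈ B) :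
    SSD2PWitness A ε {z | z.fst ∈ B ∧ z.snd ∈ closedBall 0 1} (toLp ∞ (y, 0)) := by
  have hball : ∀ z : WithLp ∞ (X × Y),
      z ∈ closedBall 0 1 ↔ z.fst ∈ closedBall 0 1 ∧ z.snd ∈ closedBall 0 1 := fun z => by
    simp only [mem_closedBall_zero_iff, prod_norm_eq_sup, sup_le_iff]
  refine ⟨fun z hz => (hball z).mpr ⟨h.subset_closedBall hz.1, hz.2⟩, ?_, ?_, ?_, ?_⟩
  · exact (hball _).mpr ⟨h.mem_closedBall, by simp⟩
  · simpa using h.one_sub_le_norm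
  · intro z hz
    exact ⟨(hball _).mpr ⟨(h.add_sub_mem _ hz.1).1, by simpa using hz.2⟩,
      (hball _).mpr ⟨(h.add_sub_mem _ hz.1).2, by simpa using hz.2⟩⟩
  intro f hf
  set g := f.comp (inlL ∞ ℝ X Y)
  set k := f.comp (inrL ∞ ℝ X Y)
  obtain ⟨x, hx, hgx⟩ :=
    StrongDual.exists_mul_norm_le_apply_of_norming h.norming h0 (Set.mem_image_of_mem _ hf)
  obtain ⟨v, hv, hkv⟩ :=
    StrongDual.exists_mem_closedBall_mul_norm_le_apply k (c := 1 - ε) (by linarith)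
  refine ⟨toLp ∞ (x, v), ⟨hx, hv⟩, ?_⟩
  calc 1 - ε = (1 - ε) * ‖f‖ := by rw [hA f hf, mul_one]
    _ ≤ (1 - ε) * ‖g‖ + (1 - ε) * ‖k‖ := by
        rw [← mul_add]
        exact mul_le_mul_of_nonneg_left (norm_le_norm_comp_inlL_add_norm_comp_inrL f)
          (by linarith)
    _ ≤ g x + k v := add_le_add hgx hkv
    _ = f (toLp ∞ (x, v)) := by rw [← inlL_add_inrL (𝕜 := ℝ), map_add]; rfl

end LinftyProd

namespace SSD2P

open WithLp

variable {κ : Cardinal.{u}} {X Y : Type u} [NormedAddCommGroup X] [NormedSpace ℝ X]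
  [NormedAddCommGroup Y] [NormedSpace ℝ Y]

theorem of_linearIsometryEquiv (e : X ≃ₗᵢ[ℝ] Y) (h : SSD2P κ X) : SSD2P κ Y := by
  rw [ssd2p_iff] at h ⊢
  intro A hA hAκ ε hε
  have hA' : ∀ g ∈ (fun f => f.comp (e : X →L[ℝ] Y)) '' A, ‖g‖ = 1 := by
    rintro _ ⟨f, hf, rfl⟩
    exact (f.opNorm_comp_linearIsometryEquiv e).trans (hA f hf)
  obtain ⟨B, y, hw⟩ := h _ hA' (mk_image_le.trans_lt hAκ) ε hε
  exact ⟨_, _, hw.map _ e.toLinearIsometry.norm_toContinuousLinearMap_le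
    (hw.one_sub_le_norm.trans_eq (e.norm_map y).symm)⟩

theorem withLpProd_left (h : SSD2P κ X) : SSD2P κ (WithLp ∞ (X × Y)) := by
  rw [ssd2p_iff] at h ⊢
  intro A hA hAκ ε hε
  set AX := (fun g => ‖g‖⁻¹ • g) '' ((fun f => f.comp (inlL ∞ ℝ X Y)) '' A \ {0})
  have hAX : ∀ g ∈ AX, ‖g‖ = 1 := by
    rintro _ ⟨g, hg, rfl⟩
    exact norm_smul_inv_norm hg.2
  have hAXκ : #AX < κ := (mk_image_le.trans (mk_le_mk_of_subset Set.sdiff_subset)).trans_lt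
    (mk_image_le.trans_lt hAκ)
  obtain ⟨B, y, hw⟩ := h AX hAX hAXκ (min ε 1) (lt_min hε one_pos)
  exact ⟨_, _, (hw.insert_zero.withLpProd hA (lt_min hε one_pos) (min_le_right ε 1)
    (Set.mem_insert 0 B)).mono subset_rfl (min_le_left ε 1)⟩

theorem withLpProd_right (h : SSD2P κ Y) : SSD2P κ (WithLp ∞ (X × Y)) :=
  (withLpProd_left h).of_linearIsometryEquiv (LinearIsometryEquiv.withLpProdComm ∞ ℝ Y X)

theorem left_or_right_of_withLpProd (hκ : ℵ₀ ≤ κ) (h : SSD2P κ (WithLp ∞ (X × Y))) :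
    SSD2P κ X ∨ SSD2P κ Y := by
  by_contra! ⟨hX, hY⟩
  simp only [ssd2p_iff, not_forall, not_exists] at hX hY
  obtain ⟨AX, hAX, hAXκ, εX, hεX, hX⟩ := hX
  obtain ⟨AY, hAY, hAYκ, εY, hεY, hY⟩ := hY
  set AX' := (fun g => g.comp (fstL ∞ ℝ X Y)) '' AX
  set AY' := (fun g => g.comp (sndL ∞ ℝ X Y)) '' AY
  have hA : ∀ f ∈ AX' ∪ AY', ‖f‖ = 1 := by
    rintro _ (⟨g, hg, rfl⟩ | ⟨g, hg, rfl⟩)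
    · exact (norm_comp_fstL g).trans (hAX g hg)
    · exact (norm_comp_sndL g).trans (hAY g hg)
  have hAκ : #(AX' ∪ AY' : Set _) < κ := (mk_union_le _ _).trans_lt
    (add_lt_of_lt hκ (mk_image_le.trans_lt hAXκ) (mk_image_le.trans_lt hAYκ))
  obtain ⟨B, y, hw⟩ := (ssd2p_iff.mp h) _ hA hAκ (min εX εY) (lt_min hεX hεY)
  rcases le_sup_iff.mp (hw.one_sub_le_norm.trans_eq (prod_norm_eq_sup y)) with hy | hy
  · have hwX := (hw.mono Set.subset_union_left le_rfl).map (fstL ∞ ℝ X Y) norm_fstL_le hy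
    exact hX _ _ (hwX.mono subset_rfl (min_le_left εX εY))
  · have hwY := (hw.mono Set.subset_union_right le_rfl).map (sndL ∞ ℝ X Y) norm_sndL_le hy
    exact hY _ _ (hwY.mono subset_rfl (min_le_right εX εY))

end SSD2P

theorem prodLinf_SSD2P_iff_general {X Y : Type u} [NormedAddCommGroup X] [NormedSpace ℝ X]
    [NormedAddCommGroup Y] [NormedSpace ℝ Y]
    (κ : Cardinal.{u}) (hκ : ℵ₀ < κ) :
    SSD2P κ (WithLp ⊤ (X × Y)) ↔ (SSD2P κ X ∨ SSD2P κ Y) :=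
  ⟨SSD2P.left_or_right_of_withLpProd hκ.le,
    fun h => h.elim SSD2P.withLpProd_left SSD2P.withLpProd_right⟩

/-- For `κ > ℵ₀`, the `ℓ∞`-direct sum `X ⊕∞ Y` has the `κ`-SSD2P if and only if
`X` or `Y` has the `κ`-SSD2P. -/
theorem prodLinf_SSD2P_iff {X Y : Type u} [NormedAddCommGroup X] [NormedSpace ℝ X]
    [CompleteSpace X] [NormedAddCommGroup Y] [NormedSpace ℝ Y] [CompleteSpace Y]
    (κ : Cardinal.{u}) (hκ : ℵ₀ < κ) :
    SSD2P κ (WithLp ⊤ (X × Y)) ↔ (SSD2P κ X ∨ SSD2P κ Y) :=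
  prodLinf_SSD2P_iff_general κ hκ
end
end

section
/- Let X and Y be real Banach spaces and κ > ℵ₀. If both X and Y have the κ-SSD2P, then the projective tensor product X ⊗̂_π Y has the κ-SSD2P. -/
open Cardinal Metric Filter Topology NormedSpace
open scoped ENNReal
universe u
noncomputable section

/-- `φ : X →L Y →L Z` exhibits the Banach space `Z` as the completed projective tensor
product `X ⊗̂_π Y`: the span of the elementary tensors `φ x y` is dense in `Z` and
`g ↦ g ∘ φ` is an isometric bijection from `Z*` onto the bounded bilinear forms on
`X × Y` (this pins down the projective norm). -/
def IsProjTensorProduct {X Y Z : Type u} [NormedAddCommGroup X] [NormedSpace ℝ X]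
    [NormedAddCommGroup Y] [NormedSpace ℝ Y] [NormedAddCommGroup Z] [NormedSpace ℝ Z]
    (φ : X →L[ℝ] Y →L[ℝ] Z) : Prop :=
  Dense ((Submodule.span ℝ {z : Z | ∃ x y, φ x y = z} : Submodule ℝ Z) : Set Z) ∧
  (∀ g : Z →L[ℝ] ℝ, ‖(ContinuousLinearMap.compL ℝ Y Z ℝ g).comp φ‖ = ‖g‖) ∧
  (∀ b : X →L[ℝ] Y →L[ℝ] ℝ, ∃ g : Z →L[ℝ] ℝ, (ContinuousLinearMap.compL ℝ Y Z ℝ g).comp φ = b)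

/-!
Each `g ∈ A` pulls back to a norm-one bilinear form `b_g = g ∘ φ` on `X × Y`. Pick `v_g ∈ B_Y`
almost norming `b_g`, apply the SSD2P of `X` to the functionals `b_g(·, v_g)` to get `a_g` and
`x`, then the SSD2P of `Y` to the functionals `b_g(a_g, ·)` to get `c_g` and `y`. The elementary
tensors `a_g ⊗ c_g` almost norm `A`, and `x ⊗ y` is the required direction because
`2 (a ⊗ c ± x ⊗ y) = (a + x) ⊗ (c ± y) + (a - x) ⊗ (c ∓ y)` while `‖u ⊗ v‖ = ‖u‖ ‖v‖`.
-/

section Bilinear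

variable {E F G : Type*} [NormedAddCommGroup E] [NormedSpace ℝ E] [NormedAddCommGroup F]
  [NormedSpace ℝ F] [NormedAddCommGroup G] [NormedSpace ℝ G]

theorem ContinuousLinearMap.exists_norm_le_one_mul_opNorm_le (f : E →L[ℝ] F) {δ : ℝ}
    (hδ : 0 < δ) : ∃ v, ‖v‖ ≤ 1 ∧ (1 - δ) * ‖f‖ ≤ ‖f v‖ := by
  rcases eq_or_ne f 0 with rfl | hf
  · exact ⟨0, by simp, by simp⟩
  obtain ⟨v, hv, hfv⟩ :=
    f.exists_lt_apply_of_lt_opNorm (r := (1 - δ) * ‖f‖) (by nlinarith [norm_pos_iff.mpr hf])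
  exact ⟨v, hv.le, hfv.le⟩

theorem ContinuousLinearMap.norm_apply_apply_le_one {φ : E →L[ℝ] F →L[ℝ] G} (hφ : ‖φ‖ ≤ 1)
    {u : E} {v : F} (hu : ‖u‖ ≤ 1) (hv : ‖v‖ ≤ 1) : ‖φ u v‖ ≤ 1 :=
  calc ‖φ u v‖ ≤ ‖φ‖ * ‖u‖ * ‖v‖ := φ.le_opNorm₂ u v
    _ ≤ 1 * 1 * 1 := by gcongr
    _ = 1 := by norm_num

theorem ContinuousLinearMap.norm_apply_add_apply_le_one {φ : E →L[ℝ] F →L[ℝ] G} (hφ : ‖φ‖ ≤ 1)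
    {a x : E} {c y : F} (hax : ‖a + x‖ ≤ 1 ∧ ‖a - x‖ ≤ 1) (hcy : ‖c + y‖ ≤ 1 ∧ ‖c - y‖ ≤ 1) :
    ‖φ a c + φ x y‖ ≤ 1 := by
  have hsplit : (2 : ℝ) • (φ a c + φ x y) = φ (a + x) (c + y) + φ (a - x) (c - y) := by
    simp only [map_add, map_sub, add_apply, sub_apply, two_smul]
    abel
  have htwo : ‖(2 : ℝ) • (φ a c + φ x y)‖ ≤ 2 := by
    rw [hsplit]
    linarith [norm_add_le (φ (a + x) (c + y)) (φ (a - x) (c - y)),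
      norm_apply_apply_le_one hφ hax.1 hcy.1, norm_apply_apply_le_one hφ hax.2 hcy.2]
  rw [norm_smul, Real.norm_two] at htwo
  linarith

theorem ContinuousLinearMap.norm_apply_sub_apply_le_one {φ : E →L[ℝ] F →L[ℝ] G} (hφ : ‖φ‖ ≤ 1)
    {a x : E} {c y : F} (hax : ‖a + x‖ ≤ 1 ∧ ‖a - x‖ ≤ 1) (hcy : ‖c + y‖ ≤ 1 ∧ ‖c - y‖ ≤ 1) :
    ‖φ a c - φ x y‖ ≤ 1 := by
  have hcy' : ‖c + -y‖ ≤ 1 ∧ ‖c - -y‖ ≤ 1 := by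
    rw [← sub_eq_add_neg, sub_neg_eq_add]; exact hcy.symm
  simpa [sub_eq_add_neg] using norm_apply_add_apply_le_one hφ hax hcy'

end Bilinear

/-- `range a ± y ⊆ B_E` and `1 - δ ≤ ‖y‖ ≤ 1`, as in the definition of the SSD2P. -/
def SegmentsInBall {ι E : Type*} [NormedAddCommGroup E] (δ : ℝ) (a : ι → E) (y : E) : Prop :=
  ‖y‖ ≤ 1 ∧ 1 - δ ≤ ‖y‖ ∧ ∀ i, ‖a i + y‖ ≤ 1 ∧ ‖a i - y‖ ≤ 1

namespace SegmentsInBall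

variable {ι E F G : Type*} [NormedAddCommGroup E] [NormedSpace ℝ E] [NormedAddCommGroup F]
  [NormedSpace ℝ F] [NormedAddCommGroup G] [NormedSpace ℝ G] {δ : ℝ}

theorem norm_le_one {a : ι → E} {y : E} (h : SegmentsInBall δ a y) (i : ι) : ‖a i‖ ≤ 1 := by
  have hsplit : (2 : ℝ) • a i = (a i + y) + (a i - y) := by rw [two_smul]; abel
  have htwo : ‖(2 : ℝ) • a i‖ ≤ 2 := by
    rw [hsplit]
    linarith [norm_add_le (a i + y) (a i - y), (h.2.2 i).1, (h.2.2 i).2]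
  rw [norm_smul, Real.norm_two] at htwo
  linarith

theorem tensor {φ : E →L[ℝ] F →L[ℝ] G} (hφ : ∀ u v, ‖φ u v‖ = ‖u‖ * ‖v‖) {a : ι → E} {x : E}
    {c : ι → F} {y : F} (hax : SegmentsInBall δ a x) (hcy : SegmentsInBall δ c y) :
    SegmentsInBall (2 * δ) (fun i => φ (a i) (c i)) (φ x y) := by
  have hφ₁ : ‖φ‖ ≤ 1 := φ.opNorm_le_bound₂ zero_le_one fun u v => by rw [hφ, one_mul]
  refine ⟨φ.norm_apply_apply_le_one hφ₁ hax.1 hcy.1, ?_, fun i =>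
    ⟨φ.norm_apply_add_apply_le_one hφ₁ (hax.2.2 i) (hcy.2.2 i),
      φ.norm_apply_sub_apply_le_one hφ₁ (hax.2.2 i) (hcy.2.2 i)⟩⟩
  rw [hφ]
  nlinarith [mul_nonneg (sub_nonneg.mpr hax.1) (sub_nonneg.mpr hcy.1), hax.2.1, hcy.2.1]

end SegmentsInBall

namespace IsProjTensorProduct

variable {X Y Z : Type u} [NormedAddCommGroup X] [NormedSpace ℝ X] [NormedAddCommGroup Y]
  [NormedSpace ℝ Y] [NormedAddCommGroup Z] [NormedSpace ℝ Z] {φ : X →L[ℝ] Y →L[ℝ] Z}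

theorem norm_apply_le (hφ : IsProjTensorProduct φ) (u : X) (v : Y) : ‖φ u v‖ ≤ ‖u‖ * ‖v‖ := by
  refine norm_le_dual_bound ℝ _ (by positivity) fun g => ?_
  calc ‖g (φ u v)‖ = ‖(ContinuousLinearMap.compL ℝ Y Z ℝ g).comp φ u v‖ := rfl
    _ ≤ ‖(ContinuousLinearMap.compL ℝ Y Z ℝ g).comp φ‖ * ‖u‖ * ‖v‖ :=
      ContinuousLinearMap.le_opNorm₂ _ u v
    _ = ‖u‖ * ‖v‖ * ‖g‖ := by rw [hφ.2.1]; ring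

theorem le_norm_apply (hφ : IsProjTensorProduct φ) (u : X) (v : Y) : ‖u‖ * ‖v‖ ≤ ‖φ u v‖ := by
  rcases eq_or_ne u 0 with rfl | hu
  · simp
  rcases eq_or_ne v 0 with rfl | hv
  · simp
  obtain ⟨f, hf₁, hfu⟩ := exists_dual_vector ℝ u (norm_ne_zero_iff.mpr hu)
  obtain ⟨h, hh₁, hhv⟩ := exists_dual_vector ℝ v (norm_ne_zero_iff.mpr hv)
  obtain ⟨g, hg⟩ := hφ.2.2 (f.smulRight h)
  have hg₁ : ‖g‖ = 1 := by
    rw [← hφ.2.1 g, hg, ContinuousLinearMap.norm_smulRight_apply, hf₁, hh₁, one_mul]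
  have hguv : g (φ u v) = ‖u‖ * ‖v‖ := by
    have := congrArg (fun b : X →L[ℝ] Y →L[ℝ] ℝ => b u v) hg
    simpa [hfu, hhv] using this
  calc ‖u‖ * ‖v‖ = g (φ u v) := hguv.symm
    _ ≤ ‖g‖ * ‖φ u v‖ := (Real.le_norm_self _).trans (g.le_opNorm _)
    _ = ‖φ u v‖ := by rw [hg₁, one_mul]

theorem norm_apply (hφ : IsProjTensorProduct φ) (u : X) (v : Y) : ‖φ u v‖ = ‖u‖ * ‖v‖ :=
  (hφ.norm_apply_le u v).antisymm (hφ.le_norm_apply u v)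

end IsProjTensorProduct

namespace SSD2P

variable {κ : Cardinal.{u}} {X Y : Type u} [NormedAddCommGroup X] [NormedSpace ℝ X]
  [NormedAddCommGroup Y] [NormedSpace ℝ Y] {ι : Type u} {δ : ℝ}

theorem exists_segmentsInBall (hX : SSD2P κ X) (hι : #ι < κ) (f : ι → StrongDual ℝ X)
    (hδ : 0 < δ) : ∃ (a : ι → X) (y : X), SegmentsInBall δ a y ∧
      ∀ i, (1 - δ) * ‖f i‖ ≤ f i (a i) := by
  set A := (fun i => ‖f i‖⁻¹ • f i) '' {i | f i ≠ 0}
  have hA : ∀ g ∈ A, ‖g‖ = 1 := by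
    rintro _ ⟨i, hi, rfl⟩
    rw [norm_smul, norm_inv, norm_norm, inv_mul_cancel₀ (norm_ne_zero_iff.mpr hi)]
  obtain ⟨B, y, -, hy, hyδ, hBy, hBA⟩ :=
    hX A hA (mk_image_le.trans_lt ((mk_set_le _).trans_lt hι)) δ hδ
  have hnorming : ∀ i, ∃ a, (‖a + y‖ ≤ 1 ∧ ‖a - y‖ ≤ 1) ∧ (1 - δ) * ‖f i‖ ≤ f i a := by
    intro i
    by_cases hi : f i = 0
    · refine ⟨0, ?_, by simp [hi]⟩
      simpa using mem_closedBall_zero_iff.mp hy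
    · obtain ⟨a, haB, ha⟩ := hBA _ ⟨i, hi, rfl⟩
      rw [smul_apply, smul_eq_mul,
        le_inv_mul_iff₀ (norm_pos_iff.mpr hi), mul_comm] at ha
      exact ⟨a, by simpa using hBy a haB, ha⟩
  choose a ha hfa using hnorming
  exact ⟨a, y, ⟨mem_closedBall_zero_iff.mp hy, hyδ, ha⟩, hfa⟩

theorem exists_segmentsInBall_bilinear (hX : SSD2P κ X) (hY : SSD2P κ Y) (hι : #ι < κ)
    (b : ι → X →L[ℝ] Y →L[ℝ] ℝ) (hδ₀ : 0 < δ) (hδ₁ : δ ≤ 1) :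
    ∃ (a : ι → X) (x : X) (c : ι → Y) (y : Y), SegmentsInBall δ a x ∧ SegmentsInBall δ c y ∧
      ∀ i, (1 - δ) ^ 3 * ‖b i‖ ≤ b i (a i) (c i) := by
  choose v hv hbv using fun i => (b i).flip.exists_norm_le_one_mul_opNorm_le hδ₀
  obtain ⟨a, x, hax, hfa⟩ := hX.exists_segmentsInBall hι (fun i => (b i).flip (v i)) hδ₀
  obtain ⟨c, y, hcy, hgc⟩ := hY.exists_segmentsInBall hι (fun i => b i (a i)) hδ₀
  refine ⟨a, x, c, y, hax, hcy, fun i => ?_⟩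
  have hδ : 0 ≤ 1 - δ := sub_nonneg.mpr hδ₁
  have hba : (1 - δ) ^ 2 * ‖b i‖ ≤ ‖b i (a i)‖ :=
    calc (1 - δ) ^ 2 * ‖b i‖ = (1 - δ) * ((1 - δ) * ‖(b i).flip‖) := by
          rw [ContinuousLinearMap.opNorm_flip]; ring
      _ ≤ (1 - δ) * ‖(b i).flip (v i)‖ := by gcongr; exact hbv i
      _ ≤ b i (a i) (v i) := hfa i
      _ ≤ ‖b i (a i)‖ * ‖v i‖ := (Real.le_norm_self _).trans ((b i (a i)).le_opNorm _)
      _ ≤ ‖b i (a i)‖ := mul_le_of_le_one_right (norm_nonneg _) (hv i)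
  calc (1 - δ) ^ 3 * ‖b i‖ = (1 - δ) * ((1 - δ) ^ 2 * ‖b i‖) := by ring
    _ ≤ (1 - δ) * ‖b i (a i)‖ := by gcongr
    _ ≤ b i (a i) (c i) := hgc i

end SSD2P

theorem projTensor_SSD2P_general {X Y Z : Type u} [NormedAddCommGroup X] [NormedSpace ℝ X]
    [NormedAddCommGroup Y] [NormedSpace ℝ Y]
    [NormedAddCommGroup Z] [NormedSpace ℝ Z]
    (φ : X →L[ℝ] Y →L[ℝ] Z) (hφ : IsProjTensorProduct φ)
    (κ : Cardinal.{u}) (hX : SSD2P κ X) (hY : SSD2P κ Y) :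
    SSD2P κ Z := by
  intro A hA hAκ ε hε
  set δ := min (ε / 3) 1
  have hδ₀ : 0 < δ := lt_min (by linarith) one_pos
  have hδε : 3 * δ ≤ ε := by linarith [min_le_left (ε / 3) 1]
  have hδ₁ : δ ≤ 1 := min_le_right _ _
  obtain ⟨a, x, c, y, hax, hcy, hnorming⟩ := hX.exists_segmentsInBall_bilinear hY hAκ
    (fun g : A => (ContinuousLinearMap.compL ℝ Y Z ℝ g).comp φ) hδ₀ hδ₁
  have hseg := hax.tensor hφ.norm_apply hcy
  refine ⟨Set.range fun g : A => φ (a g) (c g), φ x y, ?_, mem_closedBall_zero_iff.mpr hseg.1,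
    by linarith [hseg.2.1], ?_, ?_⟩
  · rintro _ ⟨g, rfl⟩
    exact mem_closedBall_zero_iff.mpr (hseg.norm_le_one g)
  · rintro _ ⟨g, rfl⟩
    simpa only [mem_closedBall_zero_iff] using hseg.2.2 g
  · intro g hg
    refine ⟨_, ⟨⟨g, hg⟩, rfl⟩, ?_⟩
    have hg' := hnorming ⟨g, hg⟩
    rw [hφ.2.1, hA g hg, mul_one] at hg'
    have hcube : 1 - 3 * δ ≤ (1 - δ) ^ 3 := by
      nlinarith [mul_nonneg (sq_nonneg δ) (by linarith : (0 : ℝ) ≤ 3 - δ)]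
    exact le_trans (by linarith) hg'

/-- If `X` and `Y` have the `κ`-SSD2P (`κ > ℵ₀`), then the completed projective tensor
product `X ⊗̂_π Y` has the `κ`-SSD2P. -/
theorem projTensor_SSD2P {X Y Z : Type u} [NormedAddCommGroup X] [NormedSpace ℝ X]
    [CompleteSpace X] [NormedAddCommGroup Y] [NormedSpace ℝ Y] [CompleteSpace Y]
    [NormedAddCommGroup Z] [NormedSpace ℝ Z] [CompleteSpace Z]
    (φ : X →L[ℝ] Y →L[ℝ] Z) (hφ : IsProjTensorProduct φ)
    (κ : Cardinal.{u}) (hκ : ℵ₀ < κ) (hX : SSD2P κ X) (hY : SSD2P κ Y) :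
    SSD2P κ Z :=
  projTensor_SSD2P_general φ hφ κ hX hY
end
end

section
/- Let (Xₙ) be a sequence of real Banach spaces. Suppose that for every sequence (Uₙ) of non-empty relatively weakly open subsets of the unit ball of Z := c₀(ℕ, Xₙ) and every ε > 0 there exist (xₙ) and y in B_Z with ‖y‖ ≥ 1 − ε, xₙ ± y ∈ B_Z and xₙ ∈ Uₙ for all n. Then there exists m ∈ ℕ such that X_m is not uniformly convex. -/
open Cardinal Metric Filter Topology NormedSpace
open scoped ENNReal
universe u
noncomputable section

/-!
If every `X n` were uniformly convex, each unit ball `B_{X n}` would have a nonempty slice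
`{v | c n < f n v}` whose points `v` admit `v ± w ∈ B_{X n}` only for `‖w‖ < 1/4`: near the sphere,
the midpoint of a long chord of the ball is too deep inside. Pulling these slices back along the
`n`-th coordinate gives nonempty relatively weakly open sets `U n ⊆ B_Z`, and the hypothesis with
`ε = 1/2` produces `y` with `‖y‖ ≥ 1/2` although every coordinate of `y` has norm below `1/4`.
-/

section UniformConvex

variable {E : Type*} [NormedAddCommGroup E] [NormedSpace ℝ E] [UniformConvexSpace E]

theorem exists_pos_forall_norm_lt_of_add_sub_le_one {ε : ℝ} (hε : 0 < ε) :
    ∃ δ, 0 < δ ∧ ∀ x y : E, ‖x + y‖ ≤ 1 → ‖x - y‖ ≤ 1 → 1 - δ < ‖x‖ → ‖y‖ < ε := by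
  obtain ⟨δ, hδ, hconv⟩ :=
    exists_forall_closed_ball_dist_add_le_two_sub E (by positivity : 0 < 2 * ε)
  refine ⟨δ / 2, by positivity, fun x y hp hm hx => ?_⟩
  by_contra! hy
  have hsum : (x + y) + (x - y) = (2 : ℝ) • x := by rw [two_smul]; abel
  have hdiff : (x + y) - (x - y) = (2 : ℝ) • y := by rw [two_smul]; abel
  have hfar : 2 * ε ≤ ‖(x + y) - (x - y)‖ := by
    rw [hdiff, norm_smul, Real.norm_two]; linarith
  have hclose := hconv hp hm hfar
  rw [hsum, norm_smul, Real.norm_two] at hclose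
  linarith

theorem exists_slice_forall_norm_lt {ε : ℝ} (hε : 0 < ε) :
    ∃ (f : E →L[ℝ] ℝ) (c : ℝ), (∃ v : E, ‖v‖ ≤ 1 ∧ c < f v) ∧
      ∀ x y : E, ‖x + y‖ ≤ 1 → ‖x - y‖ ≤ 1 → c < f x → ‖y‖ < ε := by
  rcases subsingleton_or_nontrivial E with hE | hE
  · exact ⟨0, -1, ⟨0, by simp⟩, fun x y _ _ _ => by simpa [Subsingleton.elim y 0]⟩
  obtain ⟨δ, hδ, hsmall⟩ := exists_pos_forall_norm_lt_of_add_sub_le_one (E := E) hε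
  obtain ⟨u, hu⟩ := exists_norm_eq E zero_le_one
  obtain ⟨f, hf, hfu⟩ := exists_dual_vector' ℝ u
  refine ⟨f, 1 - δ, ⟨u, hu.le, by simp [hfu, hu, hδ]⟩, fun x y hp hm hx => hsmall x y hp hm ?_⟩
  calc 1 - δ < f x := hx
    _ ≤ ‖f‖ * ‖x‖ := (le_abs_self _).trans (f.le_opNorm x)
    _ = ‖x‖ := by rw [hf, one_mul]

end UniformConvex

theorem isOpen_setOf_lt_weakSpace {E : Type*} [AddCommGroup E] [Module ℝ E] [TopologicalSpace E]
    (g : E →L[ℝ] ℝ) (c : ℝ) : IsOpen {w : WeakSpace ℝ E | c < g w} :=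
  isOpen_Ioi.preimage (WeakBilin.eval_continuous (topDualPairing ℝ E).flip g)

namespace c0Sum

variable {X : ℕ → Type u} [∀ n, NormedAddCommGroup (X n)] [∀ n, NormedSpace ℝ (X n)]

variable (X) in
def evalCLM (n : ℕ) : c0Sum X →L[ℝ] X n :=
  (lp.evalCLM ℝ X ∞ n).comp (c0Set X).subtypeL

theorem norm_evalCLM_le (n : ℕ) (z : c0Sum X) : ‖evalCLM X n z‖ ≤ ‖z‖ :=
  lp.norm_apply_le_norm ENNReal.top_ne_zero (z : lp X ∞) n

theorem norm_le_of_forall_evalCLM_le {z : c0Sum X} {C : ℝ} (hC : 0 ≤ C)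
    (h : ∀ n, ‖evalCLM X n z‖ ≤ C) : ‖z‖ ≤ C :=
  lp.norm_le_of_forall_le hC h

theorem exists_evalCLM_eq (n : ℕ) (v : X n) : ∃ z : c0Sum X, ‖z‖ = ‖v‖ ∧ evalCLM X n z = v := by
  have hmem : (lp.single ∞ n v : lp X ∞) ∈ c0Set X := by
    refine tendsto_const_nhds.congr' ?_
    filter_upwards [eventually_gt_atTop n] with k hk
    rw [lp.single_apply_ne _ _ _ hk.ne', norm_zero]
  exact ⟨⟨_, hmem⟩, lp.norm_single ENNReal.zero_lt_top n v, lp.single_apply_self ∞ n v⟩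

end c0Sum

theorem not_uniformConvex_of_c0Sum_weakOpen_general (X : ℕ → Type u)
    [∀ n, NormedAddCommGroup (X n)] [∀ n, NormedSpace ℝ (X n)]
    (h : ∀ U : ℕ → Set (c0Sum X),
      (∀ n, (U n).Nonempty ∧ ∃ W : Set (WeakSpace ℝ (c0Sum X)), IsOpen W ∧
        U n = (show Set (c0Sum X) from W) ∩ closedBall 0 1) →
      ∀ ε : ℝ, 0 < ε →
        ∃ (x : ℕ → c0Sum X) (y : c0Sum X), y ∈ closedBall (0 : c0Sum X) 1 ∧ 1 - ε ≤ ‖y‖ ∧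
          ∀ n, x n ∈ U n ∧ x n + y ∈ closedBall (0 : c0Sum X) 1 ∧
            x n - y ∈ closedBall (0 : c0Sum X) 1) :
    ∃ m : ℕ, ¬ UniformConvexSpace (X m) := by
  by_contra! hUC
  choose f c hslice hsmall using
    fun n => exists_slice_forall_norm_lt (E := X n) (by norm_num : (0 : ℝ) < 1 / 4)
  set U : ℕ → Set (c0Sum X) := fun n => {z | c n < f n (c0Sum.evalCLM X n z)} ∩ closedBall 0 1
  have hU : ∀ n, (U n).Nonempty ∧ ∃ W : Set (WeakSpace ℝ (c0Sum X)), IsOpen W ∧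
      U n = (show Set (c0Sum X) from W) ∩ closedBall 0 1 := fun n => by
    obtain ⟨v, hv, hcv⟩ := hslice n
    obtain ⟨z, hz, rfl⟩ := c0Sum.exists_evalCLM_eq n v
    exact ⟨⟨z, hcv, mem_closedBall_zero_iff.2 (hz.trans_le hv)⟩,
      _, isOpen_setOf_lt_weakSpace ((f n).comp (c0Sum.evalCLM X n)) (c n), rfl⟩
  obtain ⟨x, y, -, hy, hx⟩ := h U hU (1 / 2) (by norm_num)
  have hcoord : ∀ n, ‖c0Sum.evalCLM X n y‖ ≤ 1 / 4 := fun n => by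
    obtain ⟨⟨hxU, -⟩, hxp, hxm⟩ := hx n
    refine (hsmall n _ _ ?_ ?_ hxU).le
    · rw [← map_add]
      exact (c0Sum.norm_evalCLM_le n _).trans (mem_closedBall_zero_iff.1 hxp)
    · rw [← map_sub]
      exact (c0Sum.norm_evalCLM_le n _).trans (mem_closedBall_zero_iff.1 hxm)
  linarith [c0Sum.norm_le_of_forall_evalCLM_le (by norm_num) hcoord]

/-- If in `Z = c₀(ℕ, Xₙ)` one can, for every sequence of non-empty relatively weakly open
subsets of `B_Z`, find points `xₙ ∈ Uₙ` and `y` with `‖y‖ ≥ 1 - ε` and `xₙ ± y ∈ B_Z`,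
then some component `X_m` is not uniformly convex. -/
theorem not_uniformConvex_of_c0Sum_weakOpen (X : ℕ → Type u)
    [∀ n, NormedAddCommGroup (X n)] [∀ n, NormedSpace ℝ (X n)] [∀ n, CompleteSpace (X n)]
    (h : ∀ U : ℕ → Set (c0Sum X),
      (∀ n, (U n).Nonempty ∧ ∃ W : Set (WeakSpace ℝ (c0Sum X)), IsOpen W ∧
        U n = (show Set (c0Sum X) from W) ∩ closedBall 0 1) →
      ∀ ε : ℝ, 0 < ε →
        ∃ (x : ℕ → c0Sum X) (y : c0Sum X), y ∈ closedBall (0 : c0Sum X) 1 ∧ 1 - ε ≤ ‖y‖ ∧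
          ∀ n, x n ∈ U n ∧ x n + y ∈ closedBall (0 : c0Sum X) 1 ∧
            x n - y ∈ closedBall (0 : c0Sum X) 1) :
    ∃ m : ℕ, ¬ UniformConvexSpace (X m) :=
  not_uniformConvex_of_c0Sum_weakOpen_general X h
end
end

section
/- Let κ be an infinite cardinal. For every x in the unit sphere of ℓ∞(κ) there exist a net (y^x_μ) in B_{ℓ∞(κ)} indexed by ordinals μ < κ and a net (z_μ) in S_{ℓ∞(κ)} such that y^x_μ ± z_μ ∈ S_{ℓ∞(κ)} for all μ, z_μ → 0 weakly, and y^x_μ → x weakly. Explicitly, y^x_μ := x − x(μ)e_μ and z_μ := δ_μ satisfy these properties. -/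
/-!
The vectors `y μ` and `y μ ± z μ` are `x` with its `μ`-th coordinate replaced by `0` and `±1`,
so their sup norms are read off coordinatewise. For the weak limits, testing a functional `φ` on
the signed sums `∑ μ ∈ s, sign (φ δ_μ) • δ_μ`, which have norm at most `1`, gives
`∑ μ, |φ δ_μ| ≤ ‖φ‖`; hence `φ δ_μ → 0` along the cofinite filter, and
`φ (y μ) = φ x - x μ * φ δ_μ → φ x` because `x` is bounded.
-/

open Cardinal Metric Filter Topology NormedSpace
open scoped ENNReal
universe u

namespace lp

variable {ι : Type*} [DecidableEq ι]

variable {E : ι → Type*} [∀ i, NormedAddCommGroup (E i)]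

theorem coeFn_sub_single_add_single {p : ℝ≥0∞} (x : lp E p) (μ : ι) (a : E μ) :
    ⇑(x - lp.single p μ (x μ) + lp.single p μ a) = Function.update ⇑x μ a := by
  ext i
  obtain rfl | hi := eq_or_ne i μ <;> simp [*]

theorem norm_le_max_of_coeFn_eq_update {x g : lp E ∞} {μ : ι} {a : E μ}
    (hg : ⇑g = Function.update ⇑x μ a) : ‖g‖ ≤ max ‖x‖ ‖a‖ := by
  refine norm_le_of_forall_le ((norm_nonneg x).trans (le_max_left _ _)) fun i => ?_
  rw [hg]
  obtain rfl | hi := eq_or_ne i μ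
  · simp
  · rw [Function.update_of_ne hi]
    exact (norm_apply_le_norm ENNReal.top_ne_zero x i).trans (le_max_left _ _)

theorem norm_eq_of_coeFn_eq_update {x g : lp E ∞} {μ : ι} {a : E μ}
    (hg : ⇑g = Function.update ⇑x μ a) (hx : ‖x‖ ≤ ‖a‖) : ‖g‖ = ‖a‖ := by
  refine le_antisymm ((norm_le_max_of_coeFn_eq_update hg).trans (max_le hx le_rfl)) ?_
  simpa [hg] using norm_apply_le_norm ENNReal.top_ne_zero g μ

theorem norm_sum_single_le {s : Finset ι} {f : ∀ i, E i} {C : ℝ} (hC : 0 ≤ C)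
    (hf : ∀ i ∈ s, ‖f i‖ ≤ C) : ‖∑ i ∈ s, lp.single ∞ i (f i)‖ ≤ C := by
  refine norm_le_of_forall_le hC fun j => ?_
  simp only [lp.coeFn_sum, lp.coeFn_single, Finset.sum_apply, Finset.sum_pi_single]
  split_ifs with hj
  · exact hf j hj
  · simpa using hC

theorem smul_single_one {𝕜 : Type*} [NormedField 𝕜] (p : ℝ≥0∞) (μ : ι) (c : 𝕜) :
    c • lp.single (E := fun _ => 𝕜) p μ 1 = lp.single p μ c := by
  rw [← lp.single_smul, smul_eq_mul, mul_one]

theorem sum_abs_apply_single_le (φ : StrongDual ℝ (lp (fun _ : ι => ℝ) ∞)) (s : Finset ι) :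
    ∑ μ ∈ s, |φ (lp.single ∞ μ 1)| ≤ ‖φ‖ := by
  set g := ∑ μ ∈ s, lp.single ∞ μ (SignType.sign (φ (lp.single ∞ μ 1)) : ℝ)
  have hg : ‖g‖ ≤ 1 := norm_sum_single_le zero_le_one fun μ _ => by
    rcases SignType.sign (φ (lp.single ∞ μ 1)) with _ | _ | _ <;> simp
  calc ∑ μ ∈ s, |φ (lp.single ∞ μ 1)| = φ g := by
        have hφ (μ : ι) (c : ℝ) : φ (lp.single ∞ μ c) = c * φ (lp.single ∞ μ 1) := by
          rw [← smul_single_one, map_smul, smul_eq_mul]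
        rw [map_sum]
        exact Finset.sum_congr rfl fun μ _ => (sign_mul_self _).symm.trans (hφ μ _).symm
    _ ≤ ‖φ‖ * ‖g‖ := (le_abs_self _).trans (φ.le_opNorm g)
    _ ≤ ‖φ‖ := mul_le_of_le_one_right (norm_nonneg φ) hg

theorem tendsto_apply_single_cofinite (φ : StrongDual ℝ (lp (fun _ : ι => ℝ) ∞)) :
    Tendsto (fun μ => φ (lp.single ∞ μ 1)) cofinite (𝓝 0) :=
  (summable_of_sum_le (fun _ => abs_nonneg _) (sum_abs_apply_single_le φ)).of_abs
    |>.tendsto_cofinite_zero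

theorem tendsto_apply_sub_smul_single_cofinite (φ : StrongDual ℝ (lp (fun _ : ι => ℝ) ∞))
    (x : lp (fun _ : ι => ℝ) ∞) :
    Tendsto (fun μ => φ (x - x μ • lp.single ∞ μ 1)) cofinite (𝓝 (φ x)) := by
  have hbdd : IsBoundedUnder (· ≤ ·) cofinite fun μ => ‖x μ‖ :=
    isBoundedUnder_of ⟨‖x‖, norm_apply_le_norm ENNReal.top_ne_zero x⟩
  simpa using tendsto_const_nhds.sub
    (isBoundedUnder_le_mul_tendsto_zero hbdd (tendsto_apply_single_cofinite φ))

end lp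

theorem linf_kappa_nets_general {ι : Type u} [DecidableEq ι] (x : lp (fun _ : ι => ℝ) ∞)
    (hx : x ∈ sphere (0 : lp (fun _ : ι => ℝ) ∞) 1)
    (y z : ι → lp (fun _ : ι => ℝ) ∞)
    (hy : y = fun μ => x - x μ • lp.single ∞ μ (1 : ℝ))
    (hz : z = fun μ => lp.single ∞ μ (1 : ℝ)) :
    (∀ μ : ι, y μ ∈ closedBall (0 : lp (fun _ : ι => ℝ) ∞) 1 ∧
      z μ ∈ sphere (0 : lp (fun _ : ι => ℝ) ∞) 1 ∧
      y μ + z μ ∈ sphere (0 : lp (fun _ : ι => ℝ) ∞) 1 ∧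
      y μ - z μ ∈ sphere (0 : lp (fun _ : ι => ℝ) ∞) 1) ∧
    (∀ φ : StrongDual ℝ (lp (fun _ : ι => ℝ) ∞),
      Tendsto (fun μ => φ (z μ)) cofinite (𝓝 0) ∧
      Tendsto (fun μ => φ (y μ)) cofinite (𝓝 (φ x))) := by
  subst hy hz
  refine ⟨fun μ => ?_, fun φ => ⟨lp.tendsto_apply_single_cofinite φ,
    lp.tendsto_apply_sub_smul_single_cofinite φ x⟩⟩
  have hx1 : ‖x‖ = 1 := mem_sphere_zero_iff_norm.mp hx
  have hupdate (a : ℝ) :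
      ⇑(x - x μ • lp.single ∞ μ 1 + lp.single ∞ μ a : lp (fun _ : ι => ℝ) ∞) =
        Function.update ⇑x μ a := by
    rw [lp.smul_single_one]
    exact lp.coeFn_sub_single_add_single x μ a
  have hnorm (a : ℝ) (ha : ‖a‖ = 1) :
      ‖x - x μ • lp.single ∞ μ (1 : ℝ) + lp.single ∞ μ a‖ = 1 :=
    (lp.norm_eq_of_coeFn_eq_update (hupdate a) (hx1.trans ha.symm).le).trans ha
  simp only [mem_closedBall, mem_sphere, dist_zero_right]
  refine ⟨?_, by simp, hnorm 1 norm_one, ?_⟩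
  · simpa [hx1] using lp.norm_le_max_of_coeFn_eq_update (hupdate 0)
  · simpa [sub_eq_add_neg] using hnorm (-1) (by simp)

/-- In `ℓ∞(κ)`: for every `x` on the unit sphere, the nets `y_μ := x - x(μ)•e_μ` and
`z_μ := δ_μ` satisfy `y_μ ± z_μ ∈ S`, `z_μ → 0` weakly and `y_μ → x` weakly. -/
theorem linf_kappa_nets {ι : Type u} [DecidableEq ι] (κ : Cardinal.{u}) (hκ : ℵ₀ ≤ κ)
    (hι : #ι = κ) (x : lp (fun _ : ι => ℝ) ∞)
    (hx : x ∈ sphere (0 : lp (fun _ : ι => ℝ) ∞) 1)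
    (y z : ι → lp (fun _ : ι => ℝ) ∞)
    (hy : y = fun μ => x - x μ • lp.single ∞ μ (1 : ℝ))
    (hz : z = fun μ => lp.single ∞ μ (1 : ℝ)) :
    (∀ μ : ι, y μ ∈ closedBall (0 : lp (fun _ : ι => ℝ) ∞) 1 ∧
      z μ ∈ sphere (0 : lp (fun _ : ι => ℝ) ∞) 1 ∧
      y μ + z μ ∈ sphere (0 : lp (fun _ : ι => ℝ) ∞) 1 ∧
      y μ - z μ ∈ sphere (0 : lp (fun _ : ι => ℝ) ∞) 1) ∧
    (∀ φ : StrongDual ℝ (lp (fun _ : ι => ℝ) ∞),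
      Tendsto (fun μ => φ (z μ)) cofinite (𝓝 0) ∧
      Tendsto (fun μ => φ (y μ)) cofinite (𝓝 (φ x))) :=
  linf_kappa_nets_general x hx y z hy hz
end

section
/- Let X be a real Banach space and κ > ℵ₀. If X has the attaining κ-SSD2P, then: given any family 𝒰 of fewer than κ non-empty relatively weakly open subsets of B_X, a relatively weakly open neighborhood V of 0 in B_X, and ε > 0, there exist points {x_U : U ∈ 𝒰} and y ∈ V ∩ S_X such that x_U ∈ U and x_U ± y ∈ B_X for every U ∈ 𝒰. -/
/-!
By Bourgain's lemma each `U ∈ 𝒰` contains every convex combination (with fixed weights) of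
points taken from finitely many fixed slices `{x ∈ B_X | r ≤ f x}`, `‖f‖ = 1`, and `V` contains
`B_X ∩ ⋂ ker g` for finitely many norm-one `g`. Fewer than `κ` functionals occur in total, so the
attaining `κ`-SSD2P yields `B` and `y`. Since `f (x ± y) ≤ 1` while `f x` is close to `1` for
points `x ∈ B`, every functional normed by `B` vanishes at `y`, hence `y ∈ V`; and choosing the
points of the slices in `B` gives `x_U ∈ U` with `x_U ± y ∈ B_X` by convexity of the ball.
-/

open Cardinal Metric Filter Topology NormedSpace
open scoped ENNReal
universe u
noncomputable section

/-- A Banach space `X` has the attaining `κ`-SSD2P if for every set `A` of norm-one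
functionals of cardinality `< κ` there are `B ⊆ S_X` which norms `A` (i.e. `r`-norms `A`
for every `r ∈ (0,1)`) and `y ∈ S_X` with `B ± y ⊆ S_X`. -/
def ASSD2P (κ : Cardinal.{u}) (X : Type u) [NormedAddCommGroup X] [NormedSpace ℝ X] : Prop :=
  ∀ A : Set (StrongDual ℝ X), (∀ f ∈ A, ‖f‖ = 1) → #A < κ →
    ∃ (B : Set X) (y : X), B ⊆ sphere 0 1 ∧ y ∈ sphere (0 : X) 1 ∧
      (∀ x ∈ B, x + y ∈ sphere (0 : X) 1 ∧ x - y ∈ sphere (0 : X) 1) ∧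
      (∀ f ∈ A, ∀ r ∈ Set.Ioo (0:ℝ) 1, ∃ x ∈ B, r ≤ f x)

section FiniteDimensional

variable {E : Type*} [NormedAddCommGroup E] [NormedSpace ℝ E] [FiniteDimensional ℝ E]

open Module in
/-- By Carathéodory, the convex hull is the union of the images of the compact sets
`stdSimplex ℝ (Fin k) × s ^ k`, `k ≤ finrank ℝ E + 1`. -/
theorem IsCompact.convexHull {s : Set E} (hs : IsCompact s) : IsCompact (convexHull ℝ s) := by
  let F : ∀ k : ℕ, (Fin k → ℝ) × (Fin k → E) → E := fun k p => ∑ i, p.1 i • p.2 i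
  have hcover : _root_.convexHull ℝ s = ⋃ k ∈ Finset.range (finrank ℝ E + 2),
      F k '' (stdSimplex ℝ (Fin k) ×ˢ Set.univ.pi fun _ => s) := by
    refine subset_antisymm (fun x hx => ?_) (Set.iUnion₂_subset fun k _ => ?_)
    · obtain ⟨ι, _, z, w, hzs, hz, hw0, hw1, rfl⟩ := eq_pos_convex_span_of_mem_convexHull hx
      have hcard : Fintype.card ι < finrank ℝ E + 2 := by
        have hspan := Submodule.finrank_le (vectorSpan ℝ (Set.range z))
        have haff := hz.card_le_finrank_succ
        omega
      let e := (Fintype.equivFin ι).symm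
      refine Set.mem_iUnion₂.2 ⟨_, Finset.mem_range.2 hcard, (w ∘ e, z ∘ e),
        ⟨⟨fun i => (hw0 _).le, ?_⟩, fun i _ => hzs ⟨_, rfl⟩⟩, e.sum_comp fun i => w i • z i⟩
      simpa only [Function.comp_apply, e.sum_comp] using hw1
    · rintro _ ⟨⟨w, z⟩, ⟨⟨hw0, hw1⟩, hz⟩, rfl⟩
      exact (convex_convexHull ℝ s).sum_mem (fun i _ => hw0 i) hw1
        fun i _ => subset_convexHull ℝ s (hz i trivial)
  rw [hcover]
  refine Finset.isCompact_biUnion _ fun k _ => ?_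
  exact ((isCompact_stdSimplex ℝ _).prod (isCompact_univ_pi fun _ => hs)).image (by fun_prop)

/-- An extreme point `e` is not in the (compact) convex hull of `K \ ball e α`, so a
hyperplane separates them. -/
theorem exists_slice_subset_ball_of_mem_extremePoints {K : Set E} (hK : IsCompact K)
    (hKc : Convex ℝ K) {e : E} (he : e ∈ K.extremePoints ℝ) {α : ℝ} (hα : 0 < α) :
    ∃ (φ : StrongDual ℝ E) (c : ℝ), c < φ e ∧ ∀ k ∈ K, c < φ k → dist k e < α := by
  set K' := K ∩ {k | α ≤ dist k e}
  have hK' : IsCompact K' := hK.inter_right (isClosed_le continuous_const (by fun_prop))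
  have he' : e ∉ convexHull ℝ K' := fun hmem => by
    have : e ∈ (convexHull ℝ K').extremePoints ℝ :=
      inter_extremePoints_subset_extremePoints_of_subset
        (convexHull_min Set.inter_subset_left hKc) ⟨hmem, he⟩
    have := (extremePoints_convexHull_subset this).2
    simp only [Set.mem_ofPred_eq, dist_self] at this
    linarith
  obtain ⟨φ, c, hφK', hce⟩ :=
    geometric_hahn_banach_closed_point (convex_convexHull ℝ K') hK'.convexHull.isClosed he'
  refine ⟨φ, c, hce, fun k hk hck => ?_⟩
  by_contra! hfar
  exact (hφK' k (subset_convexHull ℝ K' ⟨hk, hfar⟩)).not_gt hck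

/-- Bourgain's lemma in finite dimension: by Krein–Milman `p` is close to a convex combination
of extreme points, and each extreme point has slices of `K` in any of its neighbourhoods. -/
theorem exists_convexCombination_slices_near {K : Set E} (hK : IsCompact K) (hKc : Convex ℝ K)
    {p : E} (hp : p ∈ K) {α : ℝ} (hα : 0 < α) :
    ∃ (ι : Type) (_ : Fintype ι) (w : ι → ℝ) (φ : ι → StrongDual ℝ E) (c : ι → ℝ),
      (∀ i, 0 ≤ w i) ∧ ∑ i, w i = 1 ∧ (∀ i, ∃ k ∈ K, c i < φ i k) ∧
      ∀ k : ι → E, (∀ i, k i ∈ K) → (∀ i, c i < φ i (k i)) → dist (∑ i, w i • k i) p < α := by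
  rw [← closure_convexHull_extremePoints hK hKc] at hp
  obtain ⟨q, hq, hpq⟩ := Metric.mem_closure_iff.1 hp (α / 2) (half_pos hα)
  obtain ⟨ι, _, w, e, hw0, hw1, he, rfl⟩ := mem_convexHull_iff_exists_fintype.1 hq
  choose φ c hce hφ using fun i =>
    exists_slice_subset_ball_of_mem_extremePoints hK hKc (he i) (half_pos hα)
  refine ⟨ι, _, w, φ, c, hw0, hw1, fun i => ⟨e i, (he i).1, hce i⟩, fun k hk hck => ?_⟩
  have hdiff : ∑ i, w i • (k i - e i) ∈ ball (0 : E) (α / 2) :=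
    (convex_ball 0 _).sum_mem (fun i _ => hw0 i) hw1 fun i _ => by
      simpa [dist_eq_norm] using hφ i (k i) (hk i) (hck i)
  calc dist (∑ i, w i • k i) p
      ≤ dist (∑ i, w i • k i) (∑ i, w i • e i) + dist (∑ i, w i • e i) p := dist_triangle ..
    _ < α / 2 + α / 2 := by
      refine add_lt_add ?_ (by rwa [dist_comm])
      simpa [dist_eq_norm, smul_sub, Finset.sum_sub_distrib] using hdiff
    _ = α := add_halves α

end FiniteDimensional

section NormedSpace

variable {X : Type*} [NormedAddCommGroup X] [NormedSpace ℝ X]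

theorem exists_finset_forall_abs_sub_lt_imp_mem {W : Set (WeakSpace ℝ X)} (hW : IsOpen W)
    {u : X} (hu : u ∈ W) :
    ∃ s : Finset (StrongDual ℝ X), ∃ r > 0, ∀ x : X, (∀ f ∈ s, |f x - f u| < r) → x ∈ W := by
  obtain ⟨s, r, hr, hball⟩ :=
    ((topDualPairing ℝ X).flip.weakBilin_withSeminorms.mem_nhds_iff u W).1 (hW.mem_nhds hu)
  refine ⟨s, r, hr, fun x hx => hball ?_⟩
  exact (Seminorm.mem_ball _).2 (Seminorm.finset_sup_apply_lt hr fun f hf => by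
    have h := hx f hf
    rw [← map_sub, ← Real.norm_eq_abs] at h
    exact h)

def IsRelWeaklyOpen (U : Set X) : Prop :=
  ∃ W : Set (WeakSpace ℝ X), IsOpen W ∧ U = (show Set X from W) ∩ closedBall 0 1

/-- Bourgain's lemma: `T x = (f x)_{f ∈ s}` for the finitely many `f` describing a weak
neighbourhood of `u`, and the finite-dimensional version applies to `closure (T '' B_X)`. -/
theorem IsRelWeaklyOpen.exists_convexCombination_slices_subset {U : Set X}
    (hU : IsRelWeaklyOpen U) {u : X} (hu : u ∈ U) :
    ∃ (ι : Type) (_ : Fintype ι) (w : ι → ℝ) (f : ι → StrongDual ℝ X) (c : ι → ℝ),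
      (∀ i, 0 ≤ w i) ∧ ∑ i, w i = 1 ∧ (∀ i, ∃ x ∈ closedBall (0 : X) 1, c i < f i x) ∧
      ∀ z : ι → X, (∀ i, z i ∈ closedBall (0 : X) 1) → (∀ i, c i < f i (z i)) →
        ∑ i, w i • z i ∈ U := by
  obtain ⟨W, hW, rfl⟩ := hU
  obtain ⟨s, r, hr, hsW⟩ := exists_finset_forall_abs_sub_lt_imp_mem hW hu.1
  let T : X →L[ℝ] (s → ℝ) := ContinuousLinearMap.pi fun f => f
  have hTW : ∀ x, dist (T x) (T u) < r → x ∈ W := fun x hx =>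
    hsW x fun f hf => by simpa [T, Real.dist_eq] using (dist_pi_lt_iff hr).1 hx ⟨f, hf⟩
  set K := closure (T '' closedBall (0 : X) 1)
  have hK : IsCompact K := (T.lipschitz.isBounded_image isBounded_closedBall).isCompact_closure
  have hKc : Convex ℝ K := ((convex_closedBall 0 1).linear_image T.toLinearMap).closure
  obtain ⟨ι, _, w, φ, c, hw0, hw1, hφK, hnear⟩ :=
    exists_convexCombination_slices_near hK hKc (subset_closure ⟨u, hu.2, rfl⟩) hr
  refine ⟨ι, _, w, fun i => (φ i).comp T, c, hw0, hw1, fun i => ?_, fun z hz hcz => ⟨?_, ?_⟩⟩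
  · obtain ⟨k, hk, hck⟩ := hφK i
    obtain ⟨_, hcx, x, hx, rfl⟩ :=
      mem_closure_iff.1 hk _ (isOpen_lt continuous_const (φ i).continuous) hck
    exact ⟨x, hx, hcx⟩
  · refine hTW _ ?_
    simpa only [map_sum, map_smul] using
      hnear (fun i => T (z i)) (fun i => subset_closure ⟨z i, hz i, rfl⟩) hcz
  · exact (convex_closedBall 0 1).sum_mem (fun i _ => hw0 i) hw1 fun i _ => hz i

theorem apply_le_norm_of_mem_closedBall (f : StrongDual ℝ X) {x : X}
    (hx : x ∈ closedBall (0 : X) 1) : f x ≤ ‖f‖ :=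
  (le_abs_self _).trans (by simpa using f.le_opNorm_of_le (mem_closedBall_zero_iff.1 hx))

theorem exists_norm_eq_one_slice_subset [Nontrivial X] {f : StrongDual ℝ X} {c : ℝ}
    (hfc : ∃ x ∈ closedBall (0 : X) 1, c < f x) :
    ∃ g : StrongDual ℝ X, ‖g‖ = 1 ∧ ∃ r ∈ Set.Ioo (0 : ℝ) 1,
      ∀ x ∈ closedBall (0 : X) 1, r ≤ g x → c < f x := by
  obtain ⟨x₀, hx₀, hcx₀⟩ := hfc
  rcases eq_or_ne f 0 with rfl | hf
  · obtain ⟨v, hv⟩ := exists_ne (0 : X)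
    obtain ⟨g, hg, -⟩ := exists_dual_vector ℝ v (norm_ne_zero_iff.2 hv)
    exact ⟨g, hg, 1 / 2, by norm_num, fun _ _ _ => hcx₀⟩
  have hf0 : 0 < ‖f‖ := norm_pos_iff.2 hf
  have hc : c / ‖f‖ < 1 :=
    (div_lt_one hf0).2 (hcx₀.trans_le (apply_le_norm_of_mem_closedBall f hx₀))
  refine ⟨‖f‖⁻¹ • f, norm_smul_inv_norm (𝕜 := ℝ) hf, max (1 / 2) ((1 + c / ‖f‖) / 2),
    ⟨by positivity, max_lt (by norm_num) (by linarith)⟩, fun x _ hx => ?_⟩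
  have : c / ‖f‖ < f x / ‖f‖ := by
    change _ ≤ ‖f‖⁻¹ * f x at hx
    rw [inv_mul_eq_div] at hx
    linarith [le_max_right (1 / 2 : ℝ) ((1 + c / ‖f‖) / 2)]
  exact (div_lt_div_iff_of_pos_right hf0).1 this

def Norms (B : Set X) (A : Set (StrongDual ℝ X)) : Prop :=
  ∀ f ∈ A, ∀ r ∈ Set.Ioo (0 : ℝ) 1, ∃ x ∈ B, r ≤ f x

theorem Norms.apply_eq_zero {B : Set X} {A : Set (StrongDual ℝ X)} {y : X} (hBA : Norms B A)
    (hBy : ∀ x ∈ B, x + y ∈ closedBall (0 : X) 1 ∧ x - y ∈ closedBall (0 : X) 1)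
    {f : StrongDual ℝ X} (hfA : f ∈ A) (hf : ‖f‖ ≤ 1) : f y = 0 := by
  have hsmall : ∀ r ∈ Set.Ioo (0 : ℝ) 1, |f y| ≤ 1 - r := fun r hr => by
    obtain ⟨x, hxB, hrx⟩ := hBA f hfA r hr
    have hadd := (apply_le_norm_of_mem_closedBall f (hBy x hxB).1).trans hf
    have hsub := (apply_le_norm_of_mem_closedBall f (hBy x hxB).2).trans hf
    rw [map_add] at hadd
    rw [map_sub] at hsub
    exact abs_le.2 ⟨by linarith, by linarith⟩
  refine abs_nonpos_iff.1 (le_of_forall_pos_le_add fun ε hε => ?_)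
  have := hsmall (max (1 / 2) (1 - ε)) ⟨by positivity, max_lt (by norm_num) (by linarith)⟩
  linarith [le_max_right (1 / 2 : ℝ) (1 - ε)]

theorem IsRelWeaklyOpen.exists_finset_forall_apply_eq_zero_imp_mem {V : Set X}
    (hV : IsRelWeaklyOpen V) (h0 : (0 : X) ∈ V) :
    ∃ G : Finset (StrongDual ℝ X), (∀ g ∈ G, ‖g‖ = 1) ∧
      ∀ y ∈ closedBall (0 : X) 1, (∀ g ∈ G, g y = 0) → y ∈ V := by
  classical
  obtain ⟨W, hW, rfl⟩ := hV
  obtain ⟨s, r, hr, hsW⟩ := exists_finset_forall_abs_sub_lt_imp_mem hW h0.1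
  refine ⟨(s.filter (· ≠ 0)).image fun f => ‖f‖⁻¹ • f, ?_,
    fun y hy hGy => ⟨hsW y fun f hf => ?_, hy⟩⟩
  · simp only [Finset.mem_image, Finset.mem_filter]
    rintro _ ⟨f, ⟨-, hf⟩, rfl⟩
    exact norm_smul_inv_norm (𝕜 := ℝ) hf
  rcases eq_or_ne f 0 with rfl | hf0
  · simpa using hr
  have := hGy _ (Finset.mem_image_of_mem _ (Finset.mem_filter.2 ⟨hf, hf0⟩))
  simp_all

theorem IsRelWeaklyOpen.exists_finset_forall_norms_exists_mem [Nontrivial X] {U : Set X}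
    (hU : IsRelWeaklyOpen U) (hne : U.Nonempty) :
    ∃ F : Finset (StrongDual ℝ X), (∀ f ∈ F, ‖f‖ = 1) ∧
      ∀ (B : Set X) (y : X), B ⊆ closedBall 0 1 →
        (∀ x ∈ B, x + y ∈ closedBall (0 : X) 1 ∧ x - y ∈ closedBall (0 : X) 1) → Norms B F →
        ∃ x ∈ U, x + y ∈ closedBall (0 : X) 1 ∧ x - y ∈ closedBall (0 : X) 1 := by
  classical
  obtain ⟨ι, _, w, f, c, hw0, hw1, hslice, hmem⟩ :=
    hU.exists_convexCombination_slices_subset hne.some_mem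
  choose g hg r hr hgf using fun i => exists_norm_eq_one_slice_subset (hslice i)
  refine ⟨Finset.univ.image g, by simpa using hg, fun B y hB hBy hBF => ?_⟩
  choose z hzB hrz using fun i => hBF (g i) (by simp) (r i) (hr i)
  have hcomb : ∀ a : X, (∀ i, z i ∈ closedBall a 1) → ∑ i, w i • z i ∈ closedBall a 1 :=
    fun a h => (convex_closedBall a 1).sum_mem (fun i _ => hw0 i) hw1 fun i _ => h i
  refine ⟨∑ i, w i • z i, hmem z (fun i => hB (hzB i)) fun i => hgf i _ (hB (hzB i)) (hrz i),
    ?_, ?_⟩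
  · simpa only [mem_closedBall_iff_norm, sub_neg_eq_add, sub_zero] using
      hcomb (-y) fun i => by
        simpa only [mem_closedBall_iff_norm, sub_neg_eq_add, sub_zero] using (hBy _ (hzB i)).1
  · simpa only [mem_closedBall_iff_norm, sub_zero] using
      hcomb y fun i => by simpa only [mem_closedBall_iff_norm, sub_zero] using (hBy _ (hzB i)).2

end NormedSpace

theorem Cardinal.mk_iUnion_finset_lt {α ι : Type u} {κ : Cardinal.{u}} (hκ : ℵ₀ < κ)
    (hι : #ι < κ) (s : ι → Finset α) : #(⋃ i, (s i : Set α)) < κ :=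
  (mk_iUnion_le _).trans_lt <| mul_lt_of_lt hκ.le hι <|
    (ciSup_le' fun i => (s i).finite_toSet.lt_aleph0.le).trans_lt hκ

theorem ASSD2P.nontrivial {κ : Cardinal.{u}} {X : Type u} [NormedAddCommGroup X]
    [NormedSpace ℝ X] (h : ASSD2P κ X) (hκ : 0 < κ) : Nontrivial X := by
  obtain ⟨-, y, -, hy, -⟩ := h ∅ (by simp) (by simpa using hκ)
  exact ⟨y, 0, ne_zero_of_mem_unit_sphere ⟨y, hy⟩⟩

theorem ASSD2P_implies_weakOpen_general {X : Type u} [NormedAddCommGroup X] [NormedSpace ℝ X]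
    (κ : Cardinal.{u}) (hκ : ℵ₀ < κ) (h : ASSD2P κ X)
    (𝒰 : Set (Set X)) (h𝒰 : #𝒰 < κ)
    (hU : ∀ U ∈ 𝒰, U.Nonempty ∧ ∃ W : Set (WeakSpace ℝ X), IsOpen W ∧
      U = (show Set X from W) ∩ closedBall 0 1)
    (V : Set X)
    (hV : ∃ W : Set (WeakSpace ℝ X), IsOpen W ∧ V = (show Set X from W) ∩ closedBall 0 1)
    (h0V : (0 : X) ∈ V) :
    ∃ (x : 𝒰 → X) (y : X), y ∈ V ∧ y ∈ sphere (0 : X) 1 ∧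
      ∀ U : 𝒰, x U ∈ (U : Set X) ∧ x U + y ∈ closedBall (0 : X) 1 ∧
        x U - y ∈ closedBall (0 : X) 1 := by
  have := h.nontrivial (aleph0_pos.trans hκ)
  obtain ⟨G, hG1, hGV⟩ := IsRelWeaklyOpen.exists_finset_forall_apply_eq_zero_imp_mem hV h0V
  choose F hF1 hFU using fun U : 𝒰 =>
    IsRelWeaklyOpen.exists_finset_forall_norms_exists_mem (hU U U.2).2 (hU U U.2).1
  set A : Set (StrongDual ℝ X) := (⋃ U, (F U : Set (StrongDual ℝ X))) ∪ G
  have hA1 : ∀ f ∈ A, ‖f‖ = 1 := by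
    rintro f (⟨_, ⟨U, rfl⟩, hf⟩ | hf)
    exacts [hF1 U f hf, hG1 f hf]
  have hAκ : #A < κ := (mk_union_le _ _).trans_lt <| add_lt_of_lt hκ.le
    (mk_iUnion_finset_lt hκ h𝒰 F) (G.finite_toSet.lt_aleph0.trans hκ)
  obtain ⟨B, y, hBS, hy, hBy, hBA : Norms B A⟩ := h A hA1 hAκ
  have hBy' : ∀ x ∈ B, x + y ∈ closedBall (0 : X) 1 ∧ x - y ∈ closedBall (0 : X) 1 :=
    fun x hx => ⟨sphere_subset_closedBall (hBy x hx).1, sphere_subset_closedBall (hBy x hx).2⟩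
  choose x hxU hxy using fun U => hFU U B y (hBS.trans sphere_subset_closedBall) hBy'
    fun f hf => hBA f (Or.inl (Set.mem_iUnion.2 ⟨U, hf⟩))
  refine ⟨x, y, hGV y (sphere_subset_closedBall hy) fun g hg => ?_, hy,
    fun U => ⟨hxU U, hxy U⟩⟩
  exact hBA.apply_eq_zero hBy' (Or.inr hg) (hG1 g hg).le

/-- If `X` has the attaining `κ`-SSD2P (`κ > ℵ₀`), then for every family `𝒰` of fewer
than `κ` non-empty relatively weakly open subsets of `B_X`, every relatively weakly open
neighborhood `V` of `0` in `B_X` and every `ε > 0` there are points `x_U ∈ U` and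
`y ∈ V ∩ S_X` with `x_U ± y ∈ B_X`. -/
theorem ASSD2P_implies_weakOpen {X : Type u} [NormedAddCommGroup X] [NormedSpace ℝ X]
    [CompleteSpace X] (κ : Cardinal.{u}) (hκ : ℵ₀ < κ) (h : ASSD2P κ X)
    (𝒰 : Set (Set X)) (h𝒰 : #𝒰 < κ)
    (hU : ∀ U ∈ 𝒰, U.Nonempty ∧ ∃ W : Set (WeakSpace ℝ X), IsOpen W ∧
      U = (show Set X from W) ∩ closedBall 0 1)
    (V : Set X)
    (hV : ∃ W : Set (WeakSpace ℝ X), IsOpen W ∧ V = (show Set X from W) ∩ closedBall 0 1)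
    (h0V : (0 : X) ∈ V) (ε : ℝ) (hε : 0 < ε) :
    ∃ (x : 𝒰 → X) (y : X), y ∈ V ∧ y ∈ sphere (0 : X) 1 ∧
      ∀ U : 𝒰, x U ∈ (U : Set X) ∧ x U + y ∈ closedBall (0 : X) 1 ∧
        x U - y ∈ closedBall (0 : X) 1 :=
  ASSD2P_implies_weakOpen_general κ hκ h 𝒰 h𝒰 hU V hV h0V
end
end

section
/- Let X be a real Banach space and κ > ℵ₀. Suppose that for every family 𝒰 of fewer than κ non-empty relatively weakly open subsets of B_X, every relatively weakly open neighborhood V of 0 in B_X, and every ε > 0 there are {x_U : U ∈ 𝒰} and y ∈ V ∩ S_X with x_U ∈ U and x_U ± y ∈ B_X for all U. Then for every A ⊂ S_X of cardinality < κ there exist nets {(y^x_α) : x ∈ A} and (z_α) in S_X such that ‖z_α ± y^x_α‖ → 1, z_α → 0 weakly, and y^x_α → x weakly for every x ∈ A. -/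
open Cardinal Metric Filter Topology NormedSpace
open scoped ENNReal
universe u
noncomputable section

/-!
Index the nets by the weakly open neighbourhoods `W` of `0`, ordered by reverse inclusion. For
each `W`, apply the hypothesis to the sets `((a + W) \ {0}) ∩ B_X`, `a ∈ A`, and to
`V = W ∩ B_X`: this gives `z_W ∈ W ∩ S_X` and `x^a_W ∈ (a + W) ∩ B_X`, `x^a_W ≠ 0`, with
`‖x^a_W ± z_W‖ ≤ 1`, hence `= 1` because the two vectors differ by `2 z_W`. Along the nets
`z_W → 0` and `x^a_W → a` weakly, so a norming functional of `a` forces `‖x^a_W‖ → 1`; the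
normalisations `y^a_W = x^a_W / ‖x^a_W‖` are then norm-close to `x^a_W`.
-/

open TopologicalSpace

theorem tendsto_atTop_of_forall_mem_openNhdsOf {T : Type*} [TopologicalSpace T] {t : T}
    {v : (OpenNhdsOf t)ᵒᵈ → T} (hv : ∀ W, v W ∈ OrderDual.ofDual W) :
    Tendsto v atTop (𝓝 t) :=
  OpenNhdsOf.basis_nhds.tendsto_right_iff.2 fun W _ =>
    eventually_atTop.2 ⟨OrderDual.toDual W, fun _ hV => hV (hv _)⟩

theorem tendsto_norm_add_of_norm_eq {α E : Type*} [SeminormedAddCommGroup E] {l : Filter α}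
    {u w : α → E} {r : ℝ} (hu : ∀ i, ‖u i‖ = r) (hw : Tendsto w l (𝓝 0)) :
    Tendsto (fun i => ‖u i + w i‖) l (𝓝 r) := by
  refine tendsto_iff_norm_sub_tendsto_zero.2
    (squeeze_zero_norm (fun i => ?_) (by simpa using hw.norm))
  rw [← hu i, Real.norm_eq_abs]
  simpa using abs_norm_sub_norm_le (u i + w i) (u i)

section

variable {X : Type u} [NormedAddCommGroup X] [NormedSpace ℝ X]

def IsRelWeaklyOpenInBall (U : Set X) : Prop :=
  ∃ W : Set (WeakSpace ℝ X), IsOpen W ∧ U = (show Set X from W) ∩ closedBall 0 1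

variable (X) in
def HasSymmetricUnitPerturbations (κ : Cardinal.{u}) : Prop :=
  ∀ 𝒰 : Set (Set X), #𝒰 < κ → (∀ U ∈ 𝒰, U.Nonempty ∧ IsRelWeaklyOpenInBall U) →
    ∀ V : Set X, IsRelWeaklyOpenInBall V → (0 : X) ∈ V → ∀ ε : ℝ, 0 < ε →
      ∃ (x : 𝒰 → X) (y : X), y ∈ V ∧ y ∈ sphere (0 : X) 1 ∧
        ∀ U : 𝒰, x U ∈ (U : Set X) ∧ x U + y ∈ closedBall (0 : X) 1 ∧
          x U - y ∈ closedBall (0 : X) 1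

theorem HasSymmetricUnitPerturbations.exists_of_isOpen {κ : Cardinal.{u}}
    (h : HasSymmetricUnitPerturbations X κ) {ι : Type u} (hι : #ι < κ)
    {O : ι → Set (WeakSpace ℝ X)} (hO : ∀ i, IsOpen (O i))
    (hO_ball : ∀ i, ∃ u : X, u ∈ O i ∧ ‖u‖ ≤ 1)
    {V : Set (WeakSpace ℝ X)} (hV : IsOpen V) (hV0 : (0 : X) ∈ V) :
    ∃ (x : ι → X) (y : X), y ∈ V ∧ ‖y‖ = 1 ∧ (∀ i, x i ∈ O i) ∧ (∀ i, ‖x i‖ ≤ 1) ∧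
      (∀ i, ‖x i + y‖ ≤ 1) ∧ (∀ i, ‖x i - y‖ ≤ 1) := by
  set U : ι → Set X := fun i => (show Set X from O i) ∩ closedBall 0 1
  have hU : ∀ U' ∈ Set.range U, U'.Nonempty ∧ IsRelWeaklyOpenInBall U' := by
    rintro _ ⟨i, rfl⟩
    obtain ⟨u, hu, hu1⟩ := hO_ball i
    exact ⟨⟨u, hu, mem_closedBall_zero_iff.2 hu1⟩, O i, hO i, rfl⟩
  obtain ⟨x, y, hyV, hyS, hx⟩ := h (Set.range U) (mk_range_le.trans_lt hι) hU
    _ ⟨V, hV, rfl⟩ ⟨hV0, by simp⟩ 1 one_pos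
  have hx' (i : ι) := hx ⟨U i, i, rfl⟩
  exact ⟨fun i => x ⟨U i, i, rfl⟩, y, hyV.1, mem_sphere_zero_iff_norm.1 hyS,
    fun i => (hx' i).1.1, fun i => mem_closedBall_zero_iff.1 (hx' i).1.2,
    fun i => mem_closedBall_zero_iff.1 (hx' i).2.1, fun i => mem_closedBall_zero_iff.1 (hx' i).2.2⟩

theorem HasSymmetricUnitPerturbations.exists_near_of_isOpen {κ : Cardinal.{u}}
    (h : HasSymmetricUnitPerturbations X κ) {A : Set X} (hA : A ⊆ sphere 0 1) (hAκ : #A < κ)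
    {W : Set (WeakSpace ℝ X)} (hW : IsOpen W) (hW0 : (0 : X) ∈ W) :
    ∃ (x : A → X) (z : X), z ∈ W ∧ ‖z‖ = 1 ∧ (∀ a : A, x a - a ∈ W) ∧ (∀ a, x a ≠ 0) ∧
      (∀ a, ‖x a‖ ≤ 1) ∧ (∀ a, ‖x a + z‖ ≤ 1) ∧ (∀ a, ‖x a - z‖ ≤ 1) := by
  set O : A → Set (WeakSpace ℝ X) := fun a => (· - toWeakSpace ℝ X a) ⁻¹' W ∩ {0}ᶜ
  have hO (a : A) : IsOpen (O a) :=
    (hW.preimage (continuous_sub_right _)).inter isOpen_compl_singleton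
  have hO_ball (a : A) : ∃ u : X, u ∈ O a ∧ ‖u‖ ≤ 1 :=
    ⟨a, ⟨show (a : X) - a ∈ W by simpa using hW0,
      ne_zero_of_mem_unit_sphere (⟨a, hA a.2⟩ : sphere (0 : X) 1)⟩,
      (mem_sphere_zero_iff_norm.1 (hA a.2)).le⟩
  obtain ⟨x, z, hzW, hz, hxO, hx⟩ := h.exists_of_isOpen hAκ hO hO_ball hW hW0
  exact ⟨x, z, hzW, hz, fun a => (hxO a).1, fun a => (hxO a).2, hx⟩

theorem norm_add_eq_and_norm_sub_eq_of_le {x z : X} {r : ℝ} (hz : ‖z‖ = r) (hp : ‖x + z‖ ≤ r)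
    (hm : ‖x - z‖ ≤ r) : ‖x + z‖ = r ∧ ‖x - z‖ = r := by
  have h2r : 2 * r ≤ ‖x + z‖ + ‖x - z‖ :=
    calc 2 * r = ‖(x + z) - (x - z)‖ := by
          rw [add_sub_sub_cancel, ← two_smul ℝ, norm_smul, hz, Real.norm_two]
      _ ≤ ‖x + z‖ + ‖x - z‖ := norm_sub_le _ _
  constructor <;> linarith

theorem norm_normalize_sub_self_le (x : X) : ‖NormedSpace.normalize x - x‖ ≤ |1 - ‖x‖| := by
  rcases eq_or_ne x 0 with rfl | hx
  · simp
  have hx' : 0 < ‖x‖ := norm_pos_iff.2 hx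
  refine le_of_eq ?_
  calc ‖NormedSpace.normalize x - x‖ = ‖(‖x‖⁻¹ - 1) • x‖ := by
        rw [NormedSpace.normalize, sub_smul, one_smul]
    _ = |1 - ‖x‖| := by
      rw [norm_smul, Real.norm_eq_abs, ← abs_of_pos hx', ← abs_mul, abs_of_pos hx']
      congr 1
      field_simp

variable {α : Type*} {l : Filter α}

theorem tendsto_normalize_sub_self {v : α → X} (hv : Tendsto (fun i => ‖v i‖) l (𝓝 1)) :
    Tendsto (fun i => NormedSpace.normalize (v i) - v i) l (𝓝 0) :=
  squeeze_zero_norm (fun i => norm_normalize_sub_self_le (v i))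
    (by simpa using (hv.const_sub 1).abs)

theorem tendsto_norm_of_forall_tendsto_dual {v : α → X} {a : X}
    (hv : ∀ φ : StrongDual ℝ X, Tendsto (fun i => φ (v i)) l (𝓝 (φ a)))
    (hle : ∀ i, ‖v i‖ ≤ ‖a‖) : Tendsto (fun i => ‖v i‖) l (𝓝 ‖a‖) := by
  obtain ⟨φ, hφ, hφa⟩ := exists_dual_vector'' ℝ a
  refine tendsto_of_tendsto_of_tendsto_of_le_of_le (hφa ▸ hv φ) tendsto_const_nhds
    (fun i => ?_) hle
  calc φ (v i) ≤ ‖φ (v i)‖ := Real.le_norm_self _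
    _ ≤ 1 * ‖v i‖ := φ.le_of_opNorm_le hφ _
    _ = ‖v i‖ := one_mul _

theorem tendsto_dual_of_tendsto_weakSpace_zero {v : α → WeakSpace ℝ X}
    (hv : Tendsto v l (𝓝 0)) (φ : StrongDual ℝ X) : Tendsto (fun i => φ (v i)) l (𝓝 0) :=
  ((WeakBilin.eval_continuous (topDualPairing ℝ X).flip φ).tendsto' 0 0 (map_zero φ)).comp hv

end

theorem weakOpen_implies_nets_general {X : Type u} [NormedAddCommGroup X] [NormedSpace ℝ X]
    (κ : Cardinal.{u})
    (h : ∀ 𝒰 : Set (Set X), #𝒰 < κ →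
      (∀ U ∈ 𝒰, U.Nonempty ∧ ∃ W : Set (WeakSpace ℝ X), IsOpen W ∧
        U = (show Set X from W) ∩ closedBall 0 1) →
      ∀ V : Set X,
        (∃ W : Set (WeakSpace ℝ X), IsOpen W ∧ V = (show Set X from W) ∩ closedBall 0 1) →
        (0 : X) ∈ V → ∀ ε : ℝ, 0 < ε →
        ∃ (x : 𝒰 → X) (y : X), y ∈ V ∧ y ∈ sphere (0 : X) 1 ∧
          ∀ U : 𝒰, x U ∈ (U : Set X) ∧ x U + y ∈ closedBall (0 : X) 1 ∧
            x U - y ∈ closedBall (0 : X) 1)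
    (A : Set X) (hA : A ⊆ sphere (0 : X) 1) (hAκ : #A < κ) :
    ∃ (ι : Type u) (pre : Preorder ι), Nonempty ι ∧
      (∀ a b : ι, ∃ c : ι, pre.le a c ∧ pre.le b c) ∧
      ∃ (y : A → ι → X) (z : ι → X),
        (∀ (x : A) (i : ι), y x i ∈ sphere (0 : X) 1) ∧
        (∀ i : ι, z i ∈ sphere (0 : X) 1) ∧
        (∀ x : A, Tendsto (fun i => ‖z i + y x i‖) (@Filter.atTop ι pre) (𝓝 1) ∧
          Tendsto (fun i => ‖z i - y x i‖) (@Filter.atTop ι pre) (𝓝 1)) ∧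
        (∀ φ : StrongDual ℝ X,
          Tendsto (fun i => φ (z i)) (@Filter.atTop ι pre) (𝓝 0)) ∧
        (∀ (x : A) (φ : StrongDual ℝ X),
          Tendsto (fun i => φ (y x i)) (@Filter.atTop ι pre) (𝓝 (φ (x : X)))) := by
  choose x z hzW hz hxW hx0 hx1 hx_add hx_sub using fun W : (OpenNhdsOf (0 : WeakSpace ℝ X))ᵒᵈ =>
    HasSymmetricUnitPerturbations.exists_near_of_isOpen h hA hAκ
      (OrderDual.ofDual W).isOpen (OrderDual.ofDual W).mem
  have hA1 (a : A) : ‖(a : X)‖ = 1 := mem_sphere_zero_iff_norm.1 (hA a.2)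
  have hx_eq (W) (a : A) := norm_add_eq_and_norm_sub_eq_of_le (hz W) (hx_add W a) (hx_sub W a)
  have hx_weak (a : A) (φ : StrongDual ℝ X) : Tendsto (fun W => φ (x W a)) atTop (𝓝 (φ a)) := by
    simpa using (tendsto_dual_of_tendsto_weakSpace_zero
      (tendsto_atTop_of_forall_mem_openNhdsOf (hxW · a)) φ).add_const (φ a)
  have hx_norm (a : A) : Tendsto (fun W => ‖x W a‖) atTop (𝓝 1) :=
    hA1 a ▸ tendsto_norm_of_forall_tendsto_dual (hx_weak a) fun W => (hA1 a).symm ▸ hx1 W a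
  have hy (a : A) := tendsto_normalize_sub_self (hx_norm a)
  refine ⟨_, inferInstance, inferInstance, exists_ge_ge,
    fun a W => NormedSpace.normalize (x W a), z,
    fun a W => mem_sphere_zero_iff_norm.2 (norm_normalize_eq_one_iff.2 (hx0 W a)),
    fun W => mem_sphere_zero_iff_norm.2 (hz W), fun a => ⟨?_, ?_⟩,
    tendsto_dual_of_tendsto_weakSpace_zero (tendsto_atTop_of_forall_mem_openNhdsOf hzW),
    fun a φ => ?_⟩
  · simpa using tendsto_norm_add_of_norm_eq (u := fun W => z W + x W a)
      (fun W => by rw [add_comm]; exact (hx_eq W a).1) (hy a)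
  · have hy' : Tendsto (fun W => x W a - NormedSpace.normalize (x W a)) atTop (𝓝 0) := by
      simpa using (hy a).neg
    simpa only [sub_add_sub_cancel] using tendsto_norm_add_of_norm_eq (u := fun W => z W - x W a)
      (fun W => by rw [norm_sub_rev]; exact (hx_eq W a).2) hy'
  · simpa using (hx_weak a φ).add ((φ.continuous.tendsto 0).comp (hy a))

/-- If points `x_U ∈ U` and `y ∈ V ∩ S_X` with `x_U ± y ∈ B_X` can always be found for
families of fewer than `κ` relatively weakly open subsets of `B_X`, then every `A ⊆ S_X`
of cardinality `< κ` admits nets `y^x_α → x` weakly, `z_α → 0` weakly, all in `S_X`, with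
`‖z_α ± y^x_α‖ → 1`. -/
theorem weakOpen_implies_nets {X : Type u} [NormedAddCommGroup X] [NormedSpace ℝ X]
    [CompleteSpace X] (κ : Cardinal.{u}) (hκ : ℵ₀ < κ)
    (h : ∀ 𝒰 : Set (Set X), #𝒰 < κ →
      (∀ U ∈ 𝒰, U.Nonempty ∧ ∃ W : Set (WeakSpace ℝ X), IsOpen W ∧
        U = (show Set X from W) ∩ closedBall 0 1) →
      ∀ V : Set X,
        (∃ W : Set (WeakSpace ℝ X), IsOpen W ∧ V = (show Set X from W) ∩ closedBall 0 1) →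
        (0 : X) ∈ V → ∀ ε : ℝ, 0 < ε →
        ∃ (x : 𝒰 → X) (y : X), y ∈ V ∧ y ∈ sphere (0 : X) 1 ∧
          ∀ U : 𝒰, x U ∈ (U : Set X) ∧ x U + y ∈ closedBall (0 : X) 1 ∧
            x U - y ∈ closedBall (0 : X) 1)
    (A : Set X) (hA : A ⊆ sphere (0 : X) 1) (hAκ : #A < κ) :
    ∃ (ι : Type u) (pre : Preorder ι), Nonempty ι ∧
      (∀ a b : ι, ∃ c : ι, pre.le a c ∧ pre.le b c) ∧
      ∃ (y : A → ι → X) (z : ι → X),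
        (∀ (x : A) (i : ι), y x i ∈ sphere (0 : X) 1) ∧
        (∀ i : ι, z i ∈ sphere (0 : X) 1) ∧
        (∀ x : A, Tendsto (fun i => ‖z i + y x i‖) (@Filter.atTop ι pre) (𝓝 1) ∧
          Tendsto (fun i => ‖z i - y x i‖) (@Filter.atTop ι pre) (𝓝 1)) ∧
        (∀ φ : StrongDual ℝ X,
          Tendsto (fun i => φ (z i)) (@Filter.atTop ι pre) (𝓝 0)) ∧
        (∀ (x : A) (φ : StrongDual ℝ X),
          Tendsto (fun i => φ (y x i)) (@Filter.atTop ι pre) (𝓝 (φ (x : X)))) :=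
  weakOpen_implies_nets_general κ h A hA hAκ
end
end

section
/- Let X be a T₄ locally compact topological space. Then C₀(X) fails the (density(X))⁺-SSD2P: there exists a set A of norm-one functionals on C₀(X) of cardinality at most density(X) (namely the Dirac evaluations at points of a dense subset) such that there do NOT exist functions {f_x} ⊂ B_{C₀(X)} and g ∈ B_{C₀(X)} with ‖g‖ ≥ 2/3, f_x(x) ≥ 2/3 and ‖f_x ± g‖ ≤ 1 for all x in the dense set. -/
open Cardinal Metric Filter Topology NormedSpace
open scoped ENNReal
universe u
noncomputable section

/-- The density character of a topological space: the least cardinality of a dense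
subset, joined with `ℵ₀`. -/
def densityChar (X : Type u) [TopologicalSpace X] : Cardinal.{u} :=
  sInf {c | ∃ D : Set X, Dense D ∧ #D = c} ⊔ ℵ₀

/-! The Dirac functionals at the points of a dense set are at most `density(X)` norm-one
functionals. If `‖f ± g‖ ≤ 1` and `f x ≥ 2/3`, then `|g x| ≤ 1/3`; so once every `δ_x` is
`2/3`-normed by some `f_x` with `‖f_x ± g‖ ≤ 1`, the function `g` is bounded by `1/3` on a dense
set, hence everywhere, and cannot have norm `≥ 2/3`. -/

theorem abs_le_sub_of_abs_add_le_of_abs_sub_le {a b c : ℝ} (hadd : |a + b| ≤ c)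
    (hsub : |a - b| ≤ c) : |b| ≤ c - a := by
  rw [abs_le] at *
  constructor <;> linarith

theorem exists_dense_mk_le_densityChar (X : Type u) [TopologicalSpace X] :
    ∃ D : Set X, Dense D ∧ #D ≤ densityChar X := by
  obtain ⟨D, hD, hcard⟩ :=
    csInf_mem (s := {c | ∃ D : Set X, Dense D ∧ #D = c}) ⟨_, Set.univ, dense_univ, rfl⟩
  exact ⟨D, hD, hcard ▸ le_sup_left⟩

namespace ZeroAtInftyContinuousMap

variable {X : Type u} [TopologicalSpace X]

theorem norm_coe_le_norm (f : ZeroAtInftyContinuousMap X ℝ) (x : X) : ‖f x‖ ≤ ‖f‖ :=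
  norm_toBCF_eq_norm (f := f) ▸ f.toBCF.norm_coe_le_norm x

theorem norm_le_of_forall_mem_dense {f : ZeroAtInftyContinuousMap X ℝ} {C : ℝ} (hC : 0 ≤ C)
    {D : Set X} (hD : Dense D) (h : ∀ x ∈ D, ‖f x‖ ≤ C) : ‖f‖ ≤ C := by
  rw [← norm_toBCF_eq_norm, BoundedContinuousFunction.norm_le hC]
  exact fun x => (isClosed_le f.continuous.norm continuous_const).closure_subset_iff.2 h (hD x)

def evalCLM (x : X) : StrongDual ℝ (ZeroAtInftyContinuousMap X ℝ) :=
  LinearMap.mkContinuous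
    { toFun := fun f => f x
      map_add' := fun _ _ => rfl
      map_smul' := fun _ _ => rfl } 1
    (fun f => (one_mul ‖f‖).symm ▸ norm_coe_le_norm f x)

@[simp]
theorem evalCLM_apply (x : X) (f : ZeroAtInftyContinuousMap X ℝ) : evalCLM x f = f x := rfl

theorem norm_evalCLM [RegularSpace X] [LocallyCompactSpace X] (x : X) :
    ‖evalCLM (X := X) x‖ = 1 := by
  refine le_antisymm (LinearMap.mkContinuous_norm_le _ zero_le_one _) ?_
  obtain ⟨φ, hφx, -, hφc, hφ01⟩ :=
    exists_continuous_one_zero_of_isCompact isCompact_singleton isClosed_empty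
      (Set.disjoint_empty {x})
  let F : ZeroAtInftyContinuousMap X ℝ := ⟨φ, hφc.is_zero_at_infty⟩
  have hF : ‖F‖ ≤ 1 := by
    rw [← norm_toBCF_eq_norm, BoundedContinuousFunction.norm_le zero_le_one]
    exact fun y => abs_le.2 ⟨(neg_nonpos.2 zero_le_one).trans (hφ01 y).1, (hφ01 y).2⟩
  calc (1 : ℝ) = evalCLM x F := (hφx rfl).symm
    _ ≤ ‖evalCLM x F‖ := Real.le_norm_self _
    _ ≤ ‖evalCLM (X := X) x‖ := ((evalCLM x).le_opNorm_of_le hF).trans_eq (mul_one _)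

theorem norm_le_one_sub_of_forall_mem_dense {D : Set X} (hD : Dense D) {a : ℝ} (ha : a ≤ 1)
    (f : D → ZeroAtInftyContinuousMap X ℝ) (g : ZeroAtInftyContinuousMap X ℝ)
    (h : ∀ x : D, a ≤ f x x ∧ ‖f x + g‖ ≤ 1 ∧ ‖f x - g‖ ≤ 1) : ‖g‖ ≤ 1 - a := by
  refine norm_le_of_forall_mem_dense (sub_nonneg.2 ha) hD fun x hx => ?_
  obtain ⟨hfx, hadd, hsub⟩ := h ⟨x, hx⟩
  change a ≤ f ⟨x, hx⟩ x at hfx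
  have := abs_le_sub_of_abs_add_le_of_abs_sub_le (a := f ⟨x, hx⟩ x) (b := g x)
    ((norm_coe_le_norm _ x).trans hadd) ((norm_coe_le_norm _ x).trans hsub)
  rw [Real.norm_eq_abs]
  linarith

end ZeroAtInftyContinuousMap

open ZeroAtInftyContinuousMap

/-- For a T₄ locally compact space `X`, the space `C₀(X)` fails the `density(X)⁺`-SSD2P;
concretely, for any dense `D ⊆ X` there are no `{f_x} ⊆ B` and `g ∈ B` with `‖g‖ ≥ 2/3`,
`f_x(x) ≥ 2/3` and `‖f_x ± g‖ ≤ 1` for all `x ∈ D`. -/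
theorem C0_fails_densitySucc_SSD2P (X : Type u) [TopologicalSpace X] [T4Space X]
    [LocallyCompactSpace X] :
    ¬ SSD2P (Order.succ (densityChar X)) (ZeroAtInftyContinuousMap X ℝ) ∧
    ∀ D : Set X, Dense D →
      ¬ ∃ (f : D → ZeroAtInftyContinuousMap X ℝ) (g : ZeroAtInftyContinuousMap X ℝ),
        (∀ x : D, ‖f x‖ ≤ 1) ∧ ‖g‖ ≤ 1 ∧ 2 / 3 ≤ ‖g‖ ∧
        ∀ x : D, 2 / 3 ≤ f x (x : X) ∧ ‖f x + g‖ ≤ 1 ∧ ‖f x - g‖ ≤ 1 := by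
  have no_family : ∀ D : Set X, Dense D → ∀ (f : D → ZeroAtInftyContinuousMap X ℝ)
      (g : ZeroAtInftyContinuousMap X ℝ), 2 / 3 ≤ ‖g‖ →
      ¬ ∀ x : D, 2 / 3 ≤ f x (x : X) ∧ ‖f x + g‖ ≤ 1 ∧ ‖f x - g‖ ≤ 1 :=
    fun D hD f g hg h => by
      linarith [norm_le_one_sub_of_forall_mem_dense hD (by norm_num) f g h]
  constructor
  · intro hSSD2P
    obtain ⟨D, hD, hDcard⟩ := exists_dense_mk_le_densityChar X
    obtain ⟨B, y, -, -, hy, hB, hnorming⟩ :=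
      hSSD2P (Set.range fun x : D => evalCLM (x : X)) (by rintro _ ⟨x, rfl⟩; exact norm_evalCLM _)
        (Order.lt_succ_iff.2 (mk_range_le.trans hDcard)) (1 / 3) (by norm_num)
    choose f hfB hfx using fun x : D => hnorming _ ⟨x, rfl⟩
    refine no_family D hD f y (by linarith) fun x => ⟨?_, ?_, ?_⟩
    · linarith [hfx x, evalCLM_apply (x : X) (f x)]
    · simpa using (hB _ (hfB x)).1
    · simpa using (hB _ (hfB x)).2
  · rintro D hD ⟨f, g, -, -, hg, h⟩
    exact no_family D hD f g hg h
end
end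

section
/- Let X be a T₄ locally compact space, M a set of regular signed Borel measures on X with |M| < κ ≤ c(X) where c(X) is the cellularity of X and κ is uncountable. Then there exists a non-empty open set C ⊂ X with |μ|(C) = 0 for every μ ∈ M. -/
open Cardinal Metric Filter Topology NormedSpace
open scoped ENNReal
universe u
noncomputable section

/-- The cellularity of a topological space: the supremum of the cardinalities of families
of pairwise disjoint non-empty open sets, joined with `ℵ₀`. -/
def cellularity (X : Type u) [TopologicalSpace X] : Cardinal.{u} :=
  (⨆ C : {C : Set (Set X) // (∀ U ∈ C, IsOpen U ∧ U.Nonempty) ∧ C.PairwiseDisjoint id},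
    #(C.1)) ⊔ ℵ₀

/-!
A finite measure gives positive mass to only countably many members of a disjoint family, so
fewer than `c(X)` finite measures leave some member of a large enough cellular family null.
-/

open MeasureTheory

def IsCellular {X : Type*} [TopologicalSpace X] (C : Set (Set X)) : Prop :=
  (∀ U ∈ C, IsOpen U ∧ U.Nonempty) ∧ C.PairwiseDisjoint id

theorem exists_isCellular_lt_mk_of_lt_cellularity {X : Type u} [TopologicalSpace X]
    {a : Cardinal.{u}} (ha : ℵ₀ ≤ a) (h : a < cellularity X) :
    ∃ C : Set (Set X), IsCellular C ∧ a < #C := by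
  have hlt : a < ⨆ C : {C : Set (Set X) // IsCellular C}, #C.1 := by
    rcases lt_sup_iff.mp h with hsup | hℵ₀
    · exact hsup
    · exact absurd hℵ₀ ha.not_gt
  have : Nonempty {C : Set (Set X) // IsCellular C} :=
    ⟨⟨∅, by simp, Set.pairwiseDisjoint_empty⟩⟩
  obtain ⟨C, hC⟩ := (lt_ciSup_iff bddAbove_of_small).mp hlt
  exact ⟨C.1, C.2, hC⟩

theorem Cardinal.mk_iUnion_le_of_countable {α ι : Type u} {f : ι → Set α}
    (hf : ∀ i, (f i).Countable) : #(⋃ i, f i) ≤ #ι ⊔ ℵ₀ :=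
  calc #(⋃ i, f i) ≤ #ι * ⨆ i, #(f i) := mk_iUnion_le f
    _ ≤ #ι * ℵ₀ := by gcongr; exact ciSup_le' fun i => (hf i).le_aleph0
    _ ≤ #ι ⊔ ℵ₀ := (mul_le_max _ _).trans_eq (by rw [max_assoc, max_self])

theorem MeasureTheory.exists_mem_forall_measure_eq_zero_of_pairwiseDisjoint
    {X ι : Type u} [MeasurableSpace X] (μ : ι → Measure X) [∀ i, SFinite (μ i)]
    {C : Set (Set X)} (hC : ∀ U ∈ C, MeasurableSet U) (hdisj : C.PairwiseDisjoint id)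
    (hcard : #ι ⊔ ℵ₀ < #C) : ∃ U ∈ C, ∀ i, μ i U = 0 := by
  set charged : Set C := ⋃ i, {U : C | 0 < μ i U}
  have hcharged : #charged < #C := by
    refine lt_of_le_of_lt (mk_iUnion_le_of_countable fun i => ?_) hcard
    exact Measure.countable_meas_pos_of_disjoint_iUnion (fun U : C => hC U U.2)
      fun U V hUV => hdisj U.2 V.2 (Subtype.coe_injective.ne hUV)
  obtain ⟨U, hU⟩ : ∃ U, U ∉ charged := by
    by_contra! h
    rw [Set.eq_univ_of_forall h, mk_univ] at hcharged
    exact hcharged.false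
  exact ⟨U, U.2, by simpa [charged] using hU⟩

theorem exists_null_open_cell_general (X : Type u) [TopologicalSpace X]
    [MeasurableSpace X] [BorelSpace X]
    (κ : Cardinal.{u}) (hκ : ℵ₀ < κ) (hκc : κ ≤ cellularity X)
    (M : Set (MeasureTheory.SignedMeasure X))
    (hM : #M < κ) :
    ∃ C : Set X, IsOpen C ∧ C.Nonempty ∧
      ∀ μ ∈ M, MeasureTheory.SignedMeasure.totalVariation μ C = 0 := by
  obtain ⟨C, ⟨hopen, hdisj⟩, hC⟩ := exists_isCellular_lt_mk_of_lt_cellularity le_sup_right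
    ((sup_lt_iff.mpr ⟨hM, hκ⟩).trans_le hκc)
  obtain ⟨U, hUC, hU⟩ := exists_mem_forall_measure_eq_zero_of_pairwiseDisjoint
    (fun μ : M => μ.1.totalVariation) (fun U hU => (hopen U hU).1.measurableSet) hdisj hC
  exact ⟨U, (hopen U hUC).1, (hopen U hUC).2, fun μ hμ => hU ⟨μ, hμ⟩⟩

/-- If `M` is a set of regular signed Borel measures on a T₄ locally compact space `X`
with `|M| < κ ≤ c(X)`, `κ` uncountable, then some non-empty open set `C` is
`|μ|`-null for every `μ ∈ M`. -/
theorem exists_null_open_cell (X : Type u) [TopologicalSpace X] [T4Space X]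
    [LocallyCompactSpace X] [MeasurableSpace X] [BorelSpace X]
    (κ : Cardinal.{u}) (hκ : ℵ₀ < κ) (hκc : κ ≤ cellularity X)
    (M : Set (MeasureTheory.SignedMeasure X))
    (hreg : ∀ μ ∈ M, (MeasureTheory.SignedMeasure.totalVariation μ).Regular)
    (hM : #M < κ) :
    ∃ C : Set X, IsOpen C ∧ C.Nonempty ∧
      ∀ μ ∈ M, MeasureTheory.SignedMeasure.totalVariation μ C = 0 :=
  exists_null_open_cell_general X κ hκ hκc M hM
end
end

section
/- Let X be a T₂½ (Urysohn) topological space and κ an infinite cardinal. If there exists a set A ⊂ X of cardinality κ such that for every x ∈ A every non-empty intersection of at most κ many neighborhoods of x is still a neighborhood of x, then the cellularity of X is at least κ, i.e. there exists a family of κ pairwise disjoint non-empty open subsets of X. -/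
open Cardinal Metric Filter Topology NormedSpace
open scoped ENNReal
universe u
noncomputable section

/-!
Choose, for every pair of distinct points `x ≠ y`, disjoint neighbourhoods `S x y ∋ x` and
`S y x ∋ y`. For `x ∈ A`, the intersection of the at most `#A` neighbourhoods `S x y`,
`y ∈ A \ {x}`, is again a neighbourhood of `x`, and the interiors of these intersections are
pairwise disjoint open sets, one around each point of `A`.
-/

theorem exists_nhds_pairing_disjoint {X : Type*} [TopologicalSpace X] [T2Space X] :
    ∃ S : X → X → Set X, ∀ x y, x ≠ y → S x y ∈ 𝓝 x ∧ Disjoint (S x y) (S y x) := by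
  have hsep : ∀ x y : X, ∃ V W : Set X, x ≠ y → V ∈ 𝓝 x ∧ W ∈ 𝓝 y ∧ Disjoint V W := by
    intro x y
    by_cases hxy : x = y
    · exact ⟨∅, ∅, absurd hxy⟩
    · obtain ⟨V, W, hV, hW, hVW⟩ := t2_separation_nhds hxy
      exact ⟨V, W, fun _ => ⟨hV, hW, hVW⟩⟩
  choose V W hVW using hsep
  -- Symmetrize the choice: `S y x = V y x ∩ W x y` lies in `W x y`, which is disjoint from `V x y`.
  refine ⟨fun x y => V x y ∩ W y x, fun x y hxy => ⟨?_, ?_⟩⟩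
  · exact inter_mem (hVW x y hxy).1 (hVW y x hxy.symm).2.1
  · exact (hVW x y hxy).2.2.mono Set.inter_subset_left Set.inter_subset_right

theorem exists_pairwiseDisjoint_open_nhds_of_sInter_mem_nhds {X : Type*} [TopologicalSpace X]
    [T2Space X] {A : Set X}
    (hA : ∀ x ∈ A, ∀ S : Set (Set X), #S ≤ #A → (∀ U ∈ S, U ∈ 𝓝 x) → ⋂₀ S ∈ 𝓝 x) :
    ∃ U : X → Set X, (∀ x ∈ A, IsOpen (U x) ∧ x ∈ U x) ∧ A.PairwiseDisjoint U := by
  obtain ⟨S, hS⟩ := exists_nhds_pairing_disjoint (X := X)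
  have hmem : ∀ x ∈ A, ⋂ y ∈ A \ {x}, S x y ∈ 𝓝 x := by
    intro x hx
    rw [← Set.sInter_image]
    refine hA x hx _ (mk_image_le.trans (mk_le_mk_of_subset Set.sdiff_subset)) ?_
    rintro _ ⟨y, ⟨-, hyx⟩, rfl⟩
    exact (hS x y (Ne.symm hyx)).1
  refine ⟨fun x => interior (⋂ y ∈ A \ {x}, S x y),
    fun x hx => ⟨isOpen_interior, mem_interior_iff_mem_nhds.2 (hmem x hx)⟩, ?_⟩
  intro x hx y hy hxy
  refine (hS x y hxy).2.mono ?_ ?_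
  · exact interior_subset.trans (Set.biInter_subset_of_mem ⟨hy, hxy.symm⟩)
  · exact interior_subset.trans (Set.biInter_subset_of_mem ⟨hx, hxy⟩)

theorem exists_cellular_family_of_pairwiseDisjoint {X : Type*} [TopologicalSpace X] {A : Set X}
    {U : X → Set X} (hU : ∀ x ∈ A, IsOpen (U x) ∧ x ∈ U x) (hdisj : A.PairwiseDisjoint U) :
    ∃ C : Set (Set X), #C = #A ∧ (∀ V ∈ C, IsOpen V ∧ V.Nonempty) ∧ C.PairwiseDisjoint id := by
  have hinj : A.InjOn U := fun x hx y hy hxy =>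
    hdisj.elim_set hx hy x (hU x hx).2 (hxy ▸ (hU x hx).2)
  refine ⟨U '' A, mk_image_eq_of_injOn U A hinj, ?_, hinj.pairwiseDisjoint_image.2 hdisj⟩
  rintro _ ⟨x, hx, rfl⟩
  exact ⟨(hU x hx).1, x, (hU x hx).2⟩

theorem cellular_family_of_P_points_general (X : Type u) [TopologicalSpace X] [T25Space X]
    (κ : Cardinal.{u}) (A : Set X) (hA : #A = κ)
    (hnbhd : ∀ x ∈ A, ∀ S : Set (Set X), #S ≤ κ → (∀ U ∈ S, U ∈ 𝓝 x) → ⋂₀ S ∈ 𝓝 x) :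
    ∃ C : Set (Set X), #C = κ ∧ (∀ U ∈ C, IsOpen U ∧ U.Nonempty) ∧
      C.PairwiseDisjoint id := by
  subst hA
  obtain ⟨U, hU, hdisj⟩ := exists_pairwiseDisjoint_open_nhds_of_sInter_mem_nhds hnbhd
  exact exists_cellular_family_of_pairwiseDisjoint hU hdisj

/-- If a T₂½ space `X` has a set `A` of `κ` points such that every non-empty intersection
of at most `κ` neighborhoods of a point of `A` is still a neighborhood, then `X` has a
cellular family of size `κ`. -/
theorem cellular_family_of_P_points (X : Type u) [TopologicalSpace X] [T25Space X]
    (κ : Cardinal.{u}) (hκ : ℵ₀ ≤ κ) (A : Set X) (hA : #A = κ)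
    (hnbhd : ∀ x ∈ A, ∀ S : Set (Set X), #S ≤ κ → (∀ U ∈ S, U ∈ 𝓝 x) → ⋂₀ S ∈ 𝓝 x) :
    ∃ C : Set (Set X), #C = κ ∧ (∀ U ∈ C, IsOpen U ∧ U.Nonempty) ∧
      C.PairwiseDisjoint id :=
  cellular_family_of_P_points_general X κ A hA hnbhd
end
end

section
/- Let κ > ℵ₀ be a cardinal. The Banach space ℓ∞(κ) of bounded real functions on κ fails the κ⁺-SSD2P. Concretely, taking the set of Dirac evaluations {δ_μ : μ < κ} ⊂ S_{ℓ∞(κ)*} of cardinality κ, there do not exist {f_μ : μ < κ} and g in B_{ℓ∞(κ)} with ‖g‖ ≥ 2/3, f_μ(μ) ≥ 2/3, and ‖f_μ ± g‖ ≤ 1 for all μ < κ. -/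
open Cardinal Metric Filter Topology NormedSpace
open scoped ENNReal
universe u
noncomputable section

/-!
A Dirac evaluation `δ_μ` on `ℓ∞(ι)` has norm one, so the SSD2P applied to the `#ι` functionals
`δ_μ` with `ε = 1/3` yields `f_μ` and `g` as in the second conjunct. These cannot exist: at every
coordinate `|f_μ μ| + |g μ| = max |(f_μ ± g) μ| ≤ 1`, hence `|g μ| ≤ 1/3` for all `μ`, i.e.
`‖g‖ ≤ 1/3 < 2/3`.
-/

theorem abs_add_abs_le_of_abs_add_le_of_abs_sub_le {a b c : ℝ} (h₁ : |a + b| ≤ c)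
    (h₂ : |a - b| ≤ c) : |a| + |b| ≤ c := by
  rw [abs_le] at h₁ h₂
  rcases abs_cases a with ⟨ha, -⟩ | ⟨ha, -⟩ <;> rcases abs_cases b with ⟨hb, -⟩ | ⟨hb, -⟩ <;>
    linarith

namespace lp

variable {α : Type*}

section Eval

variable {𝕜 : Type*} {E : α → Type*} {p : ℝ≥0∞} [NontriviallyNormedField 𝕜]
    [∀ i, NormedAddCommGroup (E i)] [∀ i, NormedSpace 𝕜 (E i)] [Fact (1 ≤ p)]

@[simp]
theorem evalCLM_apply (i : α) (f : lp E p) : evalCLM 𝕜 E p i f = f i := rfl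

theorem norm_evalCLM (i : α) [Nontrivial (E i)] : ‖evalCLM 𝕜 E p i‖ = 1 := by
  classical
  refine le_antisymm (LinearMap.mkContinuous_norm_le _ zero_le_one _) ?_
  obtain ⟨x, hx⟩ := exists_ne (0 : E i)
  have hx_le := (evalCLM 𝕜 E p i).le_opNorm (lp.single p i x)
  rw [lp.norm_single (zero_lt_one.trans_le Fact.out), evalCLM_apply, lp.single_apply_self] at hx_le
  exact (le_mul_iff_one_le_left (norm_pos_iff.mpr hx)).mp hx_le

end Eval

theorem norm_le_one_sub_of_norm_add_le_one_of_norm_sub_le_one {f : α → lp (fun _ : α => ℝ) ∞}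
    {g : lp (fun _ : α => ℝ) ∞} {a : ℝ} (ha : a ≤ 1) (hf : ∀ μ, a ≤ f μ μ)
    (hfg : ∀ μ, ‖f μ + g‖ ≤ 1 ∧ ‖f μ - g‖ ≤ 1) : ‖g‖ ≤ 1 - a := by
  refine norm_le_of_forall_le (sub_nonneg.mpr ha) fun μ => ?_
  have hadd := (norm_apply_le_norm ENNReal.top_ne_zero (f μ + g) μ).trans (hfg μ).1
  have hsub := (norm_apply_le_norm ENNReal.top_ne_zero (f μ - g) μ).trans (hfg μ).2
  calc ‖g μ‖ = |g μ| := Real.norm_eq_abs _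
    _ ≤ 1 - |f μ μ| := by linarith [abs_add_abs_le_of_abs_add_le_of_abs_sub_le hadd hsub]
    _ ≤ 1 - a := by linarith [hf μ, le_abs_self (f μ μ)]

end lp

theorem SSD2P.exists_of_mk_le {κ : Cardinal.{u}} {X : Type u} [NormedAddCommGroup X]
    [NormedSpace ℝ X] (hX : SSD2P (Order.succ κ) X) {ι : Type u} (hι : #ι ≤ κ)
    (φ : ι → StrongDual ℝ X) (hφ : ∀ i, ‖φ i‖ = 1) {ε : ℝ} (hε : 0 < ε) :
    ∃ (x : ι → X) (y : X), (∀ i, x i ∈ closedBall (0 : X) 1) ∧ y ∈ closedBall (0 : X) 1 ∧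
      1 - ε ≤ ‖y‖ ∧ ∀ i, 1 - ε ≤ φ i (x i) ∧ ‖x i + y‖ ≤ 1 ∧ ‖x i - y‖ ≤ 1 := by
  obtain ⟨B, y, hB, hy, hyn, hBy, hφB⟩ := hX (Set.range φ) (Set.forall_mem_range.mpr hφ)
    (mk_range_le.trans_lt (Order.lt_succ_of_le hι)) ε hε
  choose x hxB hφx using Set.forall_mem_range.mp hφB
  refine ⟨x, y, fun i => hB (hxB i), hy, hyn, fun i => ⟨hφx i, ?_⟩⟩
  simpa only [mem_closedBall_zero_iff] using hBy (x i) (hxB i)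

theorem linf_fails_succ_SSD2P_general {ι : Type u} (κ : Cardinal.{u}) (hι : #ι = κ) :
    ¬ SSD2P (Order.succ κ) (lp (fun _ : ι => ℝ) ∞) ∧
    ¬ ∃ (f : ι → lp (fun _ : ι => ℝ) ∞) (g : lp (fun _ : ι => ℝ) ∞),
      (∀ μ : ι, f μ ∈ closedBall (0 : lp (fun _ : ι => ℝ) ∞) 1) ∧
      g ∈ closedBall (0 : lp (fun _ : ι => ℝ) ∞) 1 ∧ 2 / 3 ≤ ‖g‖ ∧
      ∀ μ : ι, 2 / 3 ≤ f μ μ ∧ ‖f μ + g‖ ≤ 1 ∧ ‖f μ - g‖ ≤ 1 := by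
  have hno : ¬ ∃ (f : ι → lp (fun _ : ι => ℝ) ∞) (g : lp (fun _ : ι => ℝ) ∞),
      (∀ μ : ι, f μ ∈ closedBall (0 : lp (fun _ : ι => ℝ) ∞) 1) ∧
      g ∈ closedBall (0 : lp (fun _ : ι => ℝ) ∞) 1 ∧ 2 / 3 ≤ ‖g‖ ∧
      ∀ μ : ι, 2 / 3 ≤ f μ μ ∧ ‖f μ + g‖ ≤ 1 ∧ ‖f μ - g‖ ≤ 1 := by
    rintro ⟨f, g, -, -, hg, hfg⟩
    have := lp.norm_le_one_sub_of_norm_add_le_one_of_norm_sub_le_one (by norm_num)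
      (fun μ => (hfg μ).1) (fun μ => (hfg μ).2)
    linarith
  refine ⟨fun hS => hno ?_, hno⟩
  obtain ⟨x, y, hx, hy, hyn, hxy⟩ :=
    hS.exists_of_mk_le hι.le (lp.evalCLM ℝ _ ∞) (fun μ => lp.norm_evalCLM μ) (ε := 1 / 3)
      (by norm_num)
  norm_num only [lp.evalCLM_apply] at hyn hxy
  exact ⟨x, y, hx, hy, hyn, hxy⟩

/-- For `κ > ℵ₀`, `ℓ∞(κ)` fails the `κ⁺`-SSD2P; concretely, there are no `{f_μ} ⊆ B` and
`g ∈ B` with `‖g‖ ≥ 2/3`, `f_μ(μ) ≥ 2/3` and `‖f_μ ± g‖ ≤ 1` for all `μ < κ`. -/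
theorem linf_fails_succ_SSD2P {ι : Type u} (κ : Cardinal.{u}) (hκ : ℵ₀ < κ) (hι : #ι = κ) :
    ¬ SSD2P (Order.succ κ) (lp (fun _ : ι => ℝ) ∞) ∧
    ¬ ∃ (f : ι → lp (fun _ : ι => ℝ) ∞) (g : lp (fun _ : ι => ℝ) ∞),
      (∀ μ : ι, f μ ∈ closedBall (0 : lp (fun _ : ι => ℝ) ∞) 1) ∧
      g ∈ closedBall (0 : lp (fun _ : ι => ℝ) ∞) 1 ∧ 2 / 3 ≤ ‖g‖ ∧
      ∀ μ : ι, 2 / 3 ≤ f μ μ ∧ ‖f μ + g‖ ≤ 1 ∧ ‖f μ - g‖ ≤ 1 :=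
  linf_fails_succ_SSD2P_general κ hι
end
end

section
/- Let κ > ℵ₀ be a cardinal. The Banach space ℓ∞(κ) has the attaining κ-SSD2P: for every set A of norm-one functionals on ℓ∞(κ) with |A| < κ there exist B ⊂ S_{ℓ∞(κ)} which norms A and y ∈ S_{ℓ∞(κ)} with f ± y ∈ S_{ℓ∞(κ)} for all f ∈ B. -/
open Cardinal Metric Filter Topology NormedSpace
open scoped ENNReal
universe u
noncomputable section

/-!
Every functional `f` on `ℓ∞(ι)` satisfies `∑ᵢ |f eᵢ| ≤ ‖f‖`, so it vanishes on all but countably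
many unit vectors `eᵢ`. Fewer than `#ι` functionals therefore all vanish on some common `e_μ`, once
`#ι` is uncountable. Take `y = e_μ` and let `B` be the unit vectors with `μ`-th coordinate `0`;
then `‖x ± e_μ‖ = max ‖x‖ 1 = 1` on `B`. Erasing the `μ`-th coordinate does not increase norms
and does not change the values of these functionals, so after normalising, `B` norms them.
-/

theorem exists_norm_lt_one_lt_apply_of_lt_opNorm {E : Type*} [NormedAddCommGroup E]
    [NormedSpace ℝ E] (f : StrongDual ℝ E) {r : ℝ} (hr : r < ‖f‖) :
    ∃ z : E, ‖z‖ < 1 ∧ r < f z := by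
  obtain ⟨z, hz, hrz⟩ := f.exists_lt_apply_of_lt_opNorm hr
  rcases lt_abs.1 hrz with h | h
  · exact ⟨z, hz, h⟩
  · exact ⟨-z, by rwa [norm_neg], by rwa [map_neg]⟩

namespace lp

variable {ι : Type u} [DecidableEq ι]

theorem apply_single_eq_mul (f : StrongDual ℝ ℓ^∞(ι, ℝ)) (i : ι) (a : ℝ) :
    f (lp.single ∞ i a) = a * f (lp.single ∞ i 1) := by
  rw [← smul_eq_mul a, ← map_smul, ← lp.single_smul, smul_eq_mul, mul_one]

theorem sum_abs_apply_single_le_opNorm (f : StrongDual ℝ ℓ^∞(ι, ℝ)) (s : Finset ι) :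
    ∑ i ∈ s, |f (lp.single ∞ i 1)| ≤ ‖f‖ := by
  set c : ι → ℝ := fun i => SignType.sign (f (lp.single ∞ i 1))
  set x : ℓ^∞(ι, ℝ) := ∑ i ∈ s, lp.single ∞ i (c i)
  have hx : ‖x‖ ≤ 1 := by
    refine lp.norm_le_of_forall_le zero_le_one fun j => ?_
    simp only [x, lp.coeFn_sum, Finset.sum_apply, lp.single_apply, Finset.sum_pi_single]
    split_ifs
    · simp only [c]; cases SignType.sign (f (lp.single ∞ j 1)) <;> simp
    · simp
  have hfx : f x = ∑ i ∈ s, |f (lp.single ∞ i 1)| := by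
    simp only [x, map_sum, apply_single_eq_mul f _ (c _), c, sign_mul_self]
  calc ∑ i ∈ s, |f (lp.single ∞ i 1)| = f x := hfx.symm
    _ ≤ ‖f‖ * ‖x‖ := (le_abs_self _).trans (f.le_opNorm x)
    _ ≤ ‖f‖ := mul_le_of_le_one_right (norm_nonneg f) hx

theorem countable_setOf_apply_single_ne_zero (f : StrongDual ℝ ℓ^∞(ι, ℝ)) :
    {i : ι | f (lp.single ∞ i 1) ≠ 0}.Countable := by
  have hsum : Summable fun i : ι => |f (lp.single ∞ i 1)| :=
    summable_of_sum_le (fun _ => abs_nonneg _) (sum_abs_apply_single_le_opNorm f)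
  simpa only [Function.support, ne_eq, abs_eq_zero] using hsum.countable_support

theorem exists_forall_apply_single_eq_zero (hι : ℵ₀ < #ι) (A : Set (StrongDual ℝ ℓ^∞(ι, ℝ)))
    (hA : #A < #ι) : ∃ μ : ι, ∀ f ∈ A, f (lp.single ∞ μ 1) = 0 := by
  set S : Set ι := ⋃ f : A, {i | (f : StrongDual ℝ ℓ^∞(ι, ℝ)) (lp.single ∞ i 1) ≠ 0}
  have hS : #S < #ι := by
    refine (mk_iUnion_le _).trans_lt (mul_lt_of_lt hι.le hA ?_)
    exact (ciSup_le' fun f : A => mk_le_aleph0_iff.2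
      (countable_setOf_apply_single_ne_zero f.1).to_subtype).trans_lt hι
  obtain ⟨μ, hμ⟩ := (Set.ne_univ_iff_exists_notMem S).1 fun h => by
    rw [h, mk_univ] at hS
    exact hS.false
  refine ⟨μ, fun f hf => ?_⟩
  by_contra h
  exact hμ (Set.mem_iUnion.2 ⟨⟨f, hf⟩, h⟩)

theorem norm_add_single_of_apply_eq_zero {x : ℓ^∞(ι, ℝ)} {μ : ι} (hx : x μ = 0) (a : ℝ) :
    ‖x + lp.single ∞ μ a‖ = max ‖x‖ |a| := by
  have hle := lp.norm_apply_le_norm ENNReal.top_ne_zero (x + lp.single ∞ μ a)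
  refine le_antisymm ?_ (max_le ?_ (by simpa [hx] using hle μ))
  · refine lp.norm_le_of_forall_le (le_max_of_le_right (abs_nonneg a)) fun j => ?_
    rcases eq_or_ne j μ with rfl | hj
    · simp [hx]
    · simpa [Pi.single_eq_of_ne hj] using
        le_max_of_le_left (lp.norm_apply_le_norm ENNReal.top_ne_zero x j)
  · refine lp.norm_le_of_forall_le (norm_nonneg _) fun j => ?_
    rcases eq_or_ne j μ with rfl | hj
    · simp [hx]
    · simpa [Pi.single_eq_of_ne hj] using hle j

theorem exists_norm_eq_one_apply_eq_zero_lt_apply (f : StrongDual ℝ ℓ^∞(ι, ℝ)) {μ : ι}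
    (hf : f (lp.single ∞ μ 1) = 0) {r : ℝ} (hr₀ : 0 ≤ r) (hr : r < ‖f‖) :
    ∃ x : ℓ^∞(ι, ℝ), ‖x‖ = 1 ∧ x μ = 0 ∧ r < f x := by
  obtain ⟨z, hz, hrz⟩ := exists_norm_lt_one_lt_apply_of_lt_opNorm f hr
  set w := z - lp.single ∞ μ (z μ)
  have hwμ : w μ = 0 := by simp [w]
  have hw : ‖w‖ ≤ 1 := by
    have := norm_add_single_of_apply_eq_zero hwμ (z μ)
    rw [sub_add_cancel] at this
    exact (le_max_left _ _).trans (this.ge.trans hz.le)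
  have hfw : f w = f z := by
    rw [map_sub, apply_single_eq_mul, hf, mul_zero, sub_zero]
  have hw₀ : 0 < ‖w‖ := norm_pos_iff.2 fun h => by
    rw [h, map_zero] at hfw
    linarith
  refine ⟨‖w‖⁻¹ • w, norm_smul_inv_norm (norm_pos_iff.1 hw₀), by simp [hwμ], ?_⟩
  calc r < f w := hfw ▸ hrz
    _ ≤ ‖w‖⁻¹ * f w := le_mul_of_one_le_left (by linarith) (one_le_inv₀ hw₀ |>.2 hw)
    _ = f (‖w‖⁻¹ • w) := by rw [map_smul, smul_eq_mul]

end lp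

/-- For `κ > ℵ₀`, the space `ℓ∞(κ)` has the attaining `κ`-SSD2P. -/
theorem linf_ASSD2P {ι : Type u} (κ : Cardinal.{u}) (hκ : ℵ₀ < κ) (hι : #ι = κ) :
    ASSD2P κ (lp (fun _ : ι => ℝ) ∞) := by
  classical
  subst hι
  intro A hA hAκ
  obtain ⟨μ, hμ⟩ := lp.exists_forall_apply_single_eq_zero hκ A hAκ
  refine ⟨{x | ‖x‖ = 1 ∧ x μ = 0}, lp.single ∞ μ 1, fun x hx => mem_sphere_zero_iff_norm.2 hx.1,
    by simp, fun x ⟨hx, hxμ⟩ => ⟨?_, ?_⟩, fun f hf r hr => ?_⟩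
  · rw [mem_sphere_zero_iff_norm, lp.norm_add_single_of_apply_eq_zero hxμ, hx]
    simp
  · rw [mem_sphere_zero_iff_norm, sub_eq_add_neg, ← lp.single_neg,
      lp.norm_add_single_of_apply_eq_zero hxμ, hx]
    simp
  · obtain ⟨x, hx, hxμ, hrx⟩ := lp.exists_norm_eq_one_apply_eq_zero_lt_apply f (hμ f hf) hr.1.le
      (by rw [hA f hf]; exact hr.2)
    exact ⟨x, ⟨hx, hxμ⟩, hrx.le⟩
end
end
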